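/- arXiv:1204.6703 — 7 statements merged into one kernel-verified Lean document; each statement's English description precedes it below -/
import Mathlib

section
/- In the independent-factor exchangeable moment model with three views, for every η ∈ ℝ^d the matrix Triples(η) := E[(x_1−μ)(x_2−μ)ᵀ ⟨η, x_3−μ⟩] equals O diag(Oᵀη) diag(μ_{1,3}, μ_{2,3}, …, μ_{k,3}) Oᵀ, where μ_{i,3} := E[(h_i − E[h_i])³]. -/
open MeasureTheory ProbabilityTheory Matrix

section AuxLemmas

open MeasurableSpace
open scoped ENNReal

lemma countable_generatePiSystem' {α : Type*} {S : Set (Set α)} (hS : S.Countable) :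
    (generatePiSystem S).Countable := by
  have hsub : generatePiSystem S ⊆ (fun t => ⋂₀ t) '' {t | t.Finite ∧ t ⊆ S} := by
    intro s hs
    induction hs with
    | base hs => exact ⟨{_}, ⟨Set.finite_singleton _, Set.singleton_subset_iff.2 hs⟩,
        Set.sInter_singleton _⟩
    | inter _ _ _ ih1 ih2 =>
        obtain ⟨u, ⟨hu1, hu2⟩, rfl⟩ := ih1
        obtain ⟨v, ⟨hv1, hv2⟩, rfl⟩ := ih2
        exact ⟨u ∪ v, ⟨hu1.union hv1, Set.union_subset hu2 hv2⟩, (Set.sInter_union _ _)⟩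
  exact ((Set.countable_setOf_finite_subset hS).image _).mono hsub

lemma ae_indepFun_of_kernel_indepFun {α Ω β γ : Type*} {mα : MeasurableSpace α}
    {mΩ : MeasurableSpace Ω} [mβ : MeasurableSpace β] [mγ : MeasurableSpace γ]
    [CountablyGenerated β] [CountablyGenerated γ]
    {κ : Kernel α Ω} [IsMarkovKernel κ] {μ : Measure α}
    {X : Ω → β} {Y : Ω → γ} (hX : Measurable X) (hY : Measurable Y)
    (hXY : Kernel.IndepFun X Y κ μ) :
    ∀ᵐ a ∂μ, IndepFun X Y (κ a) := by
  set S := generatePiSystem (countableGeneratingSet β) with hS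
  set T := generatePiSystem (countableGeneratingSet γ) with hT
  have hSc : S.Countable := countable_generatePiSystem' (countable_countableGeneratingSet)
  have hTc : T.Countable := countable_generatePiSystem' (countable_countableGeneratingSet)
  have hSm : ∀ s ∈ S, MeasurableSet s := fun s hs =>
    generatePiSystem_measurableSet (fun t ht => measurableSet_countableGeneratingSet ht) _ hs
  have hTm : ∀ t ∈ T, MeasurableSet t := fun t ht =>
    generatePiSystem_measurableSet (fun u hu => measurableSet_countableGeneratingSet hu) _ ht
  have h1 : ∀ᵐ a ∂μ, ∀ s ∈ S, ∀ t ∈ T,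
      κ a (X ⁻¹' s ∩ Y ⁻¹' t) = κ a (X ⁻¹' s) * κ a (Y ⁻¹' t) := by
    rw [ae_ball_iff hSc]
    intro s hs
    rw [ae_ball_iff hTc]
    intro t ht
    exact hXY _ _ ⟨s, hSm s hs, rfl⟩ ⟨t, hTm t ht, rfl⟩
  filter_upwards [h1] with a ha
  haveI : IsProbabilityMeasure (κ a) := inferInstance
  rw [IndepFun_iff_Indep]
  have hgen1 : MeasurableSpace.comap X mβ = generateFrom ((X ⁻¹' ·) '' S) := by
    conv_lhs => rw [← generateFrom_countableGeneratingSet (α := β),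
      ← generateFrom_generatePiSystem_eq, comap_generateFrom]
  have hgen2 : MeasurableSpace.comap Y mγ = generateFrom ((Y ⁻¹' ·) '' T) := by
    conv_lhs => rw [← generateFrom_countableGeneratingSet (α := γ),
      ← generateFrom_generatePiSystem_eq, comap_generateFrom]
  refine IndepSets.indep hX.comap_le hY.comap_le ?_ ?_ hgen1 hgen2 ?_
  · rintro u ⟨s, hs, rfl⟩ v ⟨t, ht, rfl⟩ hne
    rw [← Set.preimage_inter]
    exact ⟨s ∩ t, isPiSystem_generatePiSystem _ s hs t ht
      (Set.nonempty_of_nonempty_preimage (by rwa [Set.preimage_inter])), rfl⟩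
  · rintro u ⟨s, hs, rfl⟩ v ⟨t, ht, rfl⟩ hne
    rw [← Set.preimage_inter]
    exact ⟨s ∩ t, isPiSystem_generatePiSystem _ s hs t ht
      (Set.nonempty_of_nonempty_preimage (by rwa [Set.preimage_inter])), rfl⟩
  · rw [IndepSets_iff]
    rintro u v ⟨s, hs, rfl⟩ ⟨t, ht, rfl⟩
    exact ha s hs t ht
open scoped ENNReal

lemma memLp_mul_of_memLp3 {Ω : Type*} [MeasurableSpace Ω] {P : Measure Ω}
    {f g : Ω → ℝ} (hf : MemLp f 3 P) (hg : MemLp g 3 P) :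
    MemLp (fun ω => f ω * g ω) (3/2) P := by
  have h3 : (1 : ℝ≥0∞) / (3/2) = 1 / 3 + 1 / 3 := by
    rw [one_div, one_div, ENNReal.inv_div (Or.inl (by norm_num)) (Or.inl (by norm_num)),
      ← one_div, ENNReal.div_add_div_same]
    norm_num
  haveI : ENNReal.HolderTriple 3 3 (3/2) := ⟨by simpa only [one_div] using h3.symm⟩
  have := hg.smul (φ := f) hf (p := 3) (q := 3) (r := 3/2)
  · exact this

lemma integrable_mul3 {Ω : Type*} [MeasurableSpace Ω] {P : Measure Ω} [IsFiniteMeasure P]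
    {f g c : Ω → ℝ} (hf : MemLp f 3 P) (hg : MemLp g 3 P) (hc : MemLp c 3 P) :
    Integrable (fun ω => f ω * g ω * c ω) P := by
  have h2 : MemLp (fun ω => f ω * g ω) (3/2) P := memLp_mul_of_memLp3 hf hg
  have h3 : (1 : ℝ≥0∞) / 1 = 1 / (3/2) + 1 / 3 := by
    rw [one_div, one_div, one_div, inv_one,
      ENNReal.inv_div (Or.inl (by norm_num)) (Or.inl (by norm_num)), ← one_div,
      ENNReal.div_add_div_same, show (2:ℝ≥0∞)+1 = 3 by norm_num,
      ENNReal.div_self (by norm_num) (by norm_num)]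
  have h1 : MemLp (fun ω => f ω * g ω * c ω) 1 P := by
    haveI : ENNReal.HolderTriple (3/2) 3 1 := ⟨by simpa only [one_div] using h3.symm⟩
    have := hc.smul (φ := fun ω => f ω * g ω) h2 (p := 3/2) (q := 3) (r := 1)
    exact this
  exact h1.integrable le_rfl

lemma integrable_mul2 {Ω : Type*} [MeasurableSpace Ω] {P : Measure Ω} [IsFiniteMeasure P]
    {f g : Ω → ℝ} (hf : MemLp f 3 P) (hg : MemLp g 3 P) :
    Integrable (fun ω => f ω * g ω) P :=
  (memLp_mul_of_memLp3 hf hg).integrable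
    (by rw [ENNReal.le_div_iff_mul_le (Or.inl (by norm_num)) (Or.inl (by norm_num))]; norm_num)
open MeasureTheory ProbabilityTheory

lemma triple_moment_zero {Ω : Type*} [MeasurableSpace Ω] {P : Measure Ω} [IsProbabilityMeasure P]
    {k : ℕ} {g : Fin k → Ω → ℝ}
    (hind : iIndepFun g P)
    (hmeas : ∀ i, Measurable (g i)) (hzero : ∀ i, ∫ ω, g i ω ∂P = 0)
    (a b c : Fin k) (hne : ¬(b = a ∧ c = a)) :
    ∫ ω, g a ω * g b ω * g c ω ∂P = 0 := by
  have hgm : ∀ i, AEStronglyMeasurable (g i) P := fun i => (hmeas i).aestronglyMeasurable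
  by_cases hab : a = b
  · subst hab
    have hca : c ≠ a := fun hc => hne ⟨rfl, hc⟩
    have hI : IndepFun (fun ω => g a ω * g a ω) (g c) P :=
      (hind.indepFun hca.symm).comp (measurable_id.mul measurable_id) measurable_id
    have := hI.integral_mul_eq_mul_integral ((hmeas a).mul (hmeas a)).aestronglyMeasurable (hgm c)
    calc ∫ ω, g a ω * g a ω * g c ω ∂P
        = ∫ ω, (fun ω => g a ω * g a ω) ω * g c ω ∂P := rfl
      _ = (∫ ω, g a ω * g a ω ∂P) * ∫ ω, g c ω ∂P := this
      _ = 0 := by rw [hzero c, mul_zero]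
  · by_cases hca : c = a
    · subst hca
      have hI : IndepFun (fun ω => g c ω * g c ω) (g b) P :=
        (hind.indepFun (Ne.symm hab : b ≠ c).symm).comp
          (measurable_id.mul measurable_id) measurable_id
      have heq : (fun ω => g c ω * g b ω * g c ω) = fun ω => (g c ω * g c ω) * g b ω := by
        funext ω; ring
      rw [heq]
      have := hI.integral_mul_eq_mul_integral ((hmeas c).mul (hmeas c)).aestronglyMeasurable (hgm b)
      rw [show ∫ ω, g c ω * g c ω * g b ω ∂P
          = (∫ ω, g c ω * g c ω ∂P) * ∫ ω, g b ω ∂P from this, hzero b, mul_zero]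
    · by_cases hcb : c = b
      · subst hcb
        have hI : IndepFun (fun ω => g c ω * g c ω) (g a) P :=
          (hind.indepFun (fun hx => hab hx.symm : c ≠ a)).comp
            (measurable_id.mul measurable_id) measurable_id
        have heq : (fun ω => g a ω * g c ω * g c ω) = fun ω => (g c ω * g c ω) * g a ω := by
          funext ω; ring
        rw [heq]
        have := hI.integral_mul_eq_mul_integral ((hmeas c).mul (hmeas c)).aestronglyMeasurable (hgm a)
        rw [show ∫ ω, g c ω * g c ω * g a ω ∂P
            = (∫ ω, g c ω * g c ω ∂P) * ∫ ω, g a ω ∂P from this, hzero a, mul_zero]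
      · -- all distinct
        have hI : IndepFun (fun ω => g a ω * g b ω) (g c) P := by
          have := hind.indepFun_prodMk hmeas a b c (fun hx => hca hx.symm) (fun hx => hcb hx.symm)
          exact this.comp (measurable_fst.mul measurable_snd) measurable_id
        have := hI.integral_mul_eq_mul_integral ((hmeas a).mul (hmeas b)).aestronglyMeasurable (hgm c)
        rw [show ∫ ω, g a ω * g b ω * g c ω ∂P
            = (∫ ω, g a ω * g b ω ∂P) * ∫ ω, g c ω ∂P from this, hzero c, mul_zero]

end AuxLemmas

/-- Independent-factor exchangeable moment model with three views: for every `η ∈ ℝ^d`,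
`Triples(η) = E[(x₁−μ)(x₂−μ)ᵀ ⟨η, x₃−μ⟩] = O diag(Oᵀη) diag(μ_{1,3},…,μ_{k,3}) Oᵀ`,
where `μ_{i,3} = E[(hᵢ − E hᵢ)³]`. -/
theorem stmt_3 {Ω : Type*} [mΩ : MeasurableSpace Ω] [StandardBorelSpace Ω] [Nonempty Ω]
    (P : Measure Ω) [IsProbabilityMeasure P]
    {k d : ℕ} (h : Ω → Fin k → ℝ) (x1 x2 x3 : Ω → Fin d → ℝ)
    (O : Matrix (Fin d) (Fin k) ℝ)
    (hh : Measurable h) (hx : ∀ v ∈ [x1, x2, x3], Measurable v)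
    -- the latent factors are mutually independent, with finite moments
    (hindep : iIndepFun
      (fun i ω => h ω i) P)
    (hhmom : ∀ i, MemLp (fun ω => h ω i) 3 P)
    (hxmom : ∀ v ∈ [x1, x2, x3], ∀ i, MemLp (fun ω => v ω i) 3 P)
    (hxprod : ∀ i j l, Integrable (fun ω => x1 ω i * x2 ω j * x3 ω l) P)
    -- the views are conditionally independent given the latent factors
    (hci : iCondIndepFun (MeasurableSpace.comap h inferInstance) hh.comap_le
      ![x1, x2, x3] P)
    -- conditional means: `E[x_v | h] = O h`
    (hm : ∀ v ∈ [x1, x2, x3], ∀ i, P[(fun ω => v ω i)|MeasurableSpace.comap h inferInstance]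
      =ᵐ[P] fun ω => ∑ l, O i l * h ω l)
    (η : Fin d → ℝ) :
    (Matrix.of fun i j =>
        ∫ ω, (x1 ω i - ∫ ω', x1 ω' i ∂P) * (x2 ω j - ∫ ω', x1 ω' j ∂P)
          * (∑ l, η l * (x3 ω l - ∫ ω', x1 ω' l ∂P)) ∂P)
      = O * Matrix.diagonal (Oᵀ.mulVec η)
          * Matrix.diagonal (fun i => ∫ ω, (h ω i - ∫ ω', h ω' i ∂P) ^ 3 ∂P) * Oᵀ := by
  classical
  have hx1 : Measurable x1 := hx x1 (by simp)
  have hx2 : Measurable x2 := hx x2 (by simp)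
  have hx3 : Measurable x3 := hx x3 (by simp)
  have hm' : MeasurableSpace.comap h inferInstance ≤ mΩ := hh.comap_le
  -- abbreviations
  obtain ⟨Eh, hEh⟩ : ∃ f : Fin k → ℝ, ∀ a, (∫ ω', h ω' a ∂P) = f a := ⟨_, fun _ => rfl⟩
  obtain ⟨μv, hμv⟩ : ∃ f : Fin d → ℝ, ∀ i, (∫ ω', x1 ω' i ∂P) = f i := ⟨_, fun _ => rfl⟩
  simp only [hEh, hμv]
  -- integrability of h coordinates
  have hhint : ∀ a, Integrable (fun ω => h ω a) P := fun a => (hhmom a).integrable (by norm_num)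
  -- means of views
  have hmeanv : ∀ v ∈ [x1, x2, x3], ∀ i, ∫ ω, v ω i ∂P = ∑ a, O i a * Eh a := by
    intro v hv i
    rw [← integral_condExp hm' (f := fun ω => v ω i), integral_congr_ae (hm v hv i),
      integral_finset_sum _ (fun a _ => (hhint a).const_mul _)]
    exact Finset.sum_congr rfl fun a _ => by rw [integral_const_mul, hEh]
  have hμsum : ∀ i, μv i = ∑ a, O i a * Eh a := fun i => (hμv i).symm.trans (hmeanv x1 (by simp) i)
  -- centered latent factors
  have hgmeas : ∀ a, Measurable (fun ω => h ω a - Eh a) :=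
    fun a => ((measurable_pi_apply a).comp hh).sub measurable_const
  have hgL3 : ∀ a, MemLp (fun ω => h ω a - Eh a) 3 P := fun a => (hhmom a).sub (memLp_const _)
  have hgzero : ∀ a, ∫ ω, (h ω a - Eh a) ∂P = 0 := by
    intro a
    rw [integral_sub (hhint a) (integrable_const _), integral_const]
    simp [hEh a]
  have hgind : iIndepFun
      (fun a ω => h ω a - Eh a) P :=
    hindep.comp (fun a x => x - Eh a) (fun a => measurable_id.sub measurable_const)
  -- centered view coordinates are in L³
  have hxc : ∀ v ∈ [x1, x2, x3], ∀ i, MemLp (fun ω => v ω i - μv i) 3 P :=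
    fun v hv i => (hxmom v hv i).sub (memLp_const _)
  -- kernel independence facts
  have hci' : Kernel.iIndepFun
      ![x1, x2, x3] (condExpKernel P (MeasurableSpace.comap h inferInstance)) (P.trim hm') := hci
  have hxmeas : ∀ i : Fin 3, Measurable (![x1, x2, x3] i) := by
    intro i; fin_cases i <;> [exact hx1; exact hx2; exact hx3]
  have hk12 : Kernel.IndepFun x1 x2
      (condExpKernel P (MeasurableSpace.comap h inferInstance)) (P.trim hm') :=
    hci'.indepFun (show (0 : Fin 3) ≠ 1 by decide)
  have hk123 : Kernel.IndepFun (fun ω => (x1 ω, x2 ω)) x3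
      (condExpKernel P (MeasurableSpace.comap h inferInstance)) (P.trim hm') :=
    hci'.indepFun_prodMk hxmeas 0 1 2 (by decide) (by decide)
  have A12 : ∀ᵐ ω ∂P, IndepFun x1 x2
      (condExpKernel P (MeasurableSpace.comap h inferInstance) ω) :=
    ae_of_ae_trim hm' (ae_indepFun_of_kernel_indepFun hx1 hx2 hk12)
  have A123 : ∀ᵐ ω ∂P, IndepFun (fun ω' => (x1 ω', x2 ω')) x3
      (condExpKernel P (MeasurableSpace.comap h inferInstance) ω) :=
    ae_of_ae_trim hm' (ae_indepFun_of_kernel_indepFun (hx1.prodMk hx2) hx3 hk123)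
  -- kernel integrals of coordinates
  have hker : ∀ v ∈ [x1, x2, x3], ∀ᵐ ω ∂P, ∀ i : Fin d,
      Integrable (fun y => v y i) (condExpKernel P (MeasurableSpace.comap h inferInstance) ω) ∧
      ∫ y, v y i ∂(condExpKernel P (MeasurableSpace.comap h inferInstance) ω)
        = ∑ a, O i a * h ω a := by
    intro v hv
    rw [ae_all_iff]
    intro i
    have hint : Integrable (fun ω => v ω i) P := (hxmom v hv i).integrable (by norm_num)
    have h1 := hint.condExpKernel_ae (m := MeasurableSpace.comap h inferInstance)
    have h2 : (fun ω => ∫ y, v y i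
          ∂(condExpKernel P (MeasurableSpace.comap h inferInstance) ω))
        =ᵐ[P] fun ω => ∑ a, O i a * h ω a :=
      (condExp_ae_eq_integral_condExpKernel hm' hint).symm.trans (hm v hv i)
    filter_upwards [h1, h2] with ω hω1 hω2 using ⟨hω1, hω2⟩
  -- the key triple integral identity
  have key : ∀ i j l : Fin d,
      ∫ ω, (x1 ω i - μv i) * (x2 ω j - μv j) * (x3 ω l - μv l) ∂P
        = ∑ a, O i a * O j a * O l a * ∫ ω, (h ω a - Eh a) ^ 3 ∂P := by
    intro i j l
    have hF3 : Integrable (fun ω => (x1 ω i - μv i) * (x2 ω j - μv j) * (x3 ω l - μv l)) P :=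
      integrable_mul3 (hxc x1 (by simp) i) (hxc x2 (by simp) j) (hxc x3 (by simp) l)
    have step1 : ∫ ω, (x1 ω i - μv i) * (x2 ω j - μv j) * (x3 ω l - μv l) ∂P
        = ∫ ω, (∫ y, (x1 y i - μv i) * (x2 y j - μv j) * (x3 y l - μv l)
            ∂(condExpKernel P (MeasurableSpace.comap h inferInstance) ω)) ∂P := by
      rw [← integral_condExp hm'
        (f := fun ω => (x1 ω i - μv i) * (x2 ω j - μv j) * (x3 ω l - μv l))]
      exact integral_congr_ae (condExp_ae_eq_integral_condExpKernel hm' hF3)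
    have step2 : (fun ω => ∫ y, (x1 y i - μv i) * (x2 y j - μv j) * (x3 y l - μv l)
          ∂(condExpKernel P (MeasurableSpace.comap h inferInstance) ω)) =ᵐ[P]
        fun ω => (∑ a, O i a * (h ω a - Eh a)) * (∑ a, O j a * (h ω a - Eh a))
          * (∑ a, O l a * (h ω a - Eh a)) := by
      filter_upwards [A12, A123, hker x1 (by simp), hker x2 (by simp), hker x3 (by simp)]
        with ω h12 h123 hk1 hk2 hk3
      set ν := condExpKernel P (MeasurableSpace.comap h inferInstance) ω with hν
      haveI : IsProbabilityMeasure ν := by rw [hν]; infer_instance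
      have m1 : ∫ y, (x1 y i - μv i) ∂ν = ∑ a, O i a * (h ω a - Eh a) := by
        rw [integral_sub (hk1 i).1 (integrable_const _), (hk1 i).2, integral_const]
        simp only [measure_univ, probReal_univ, ENNReal.toReal_one, one_smul, smul_eq_mul, one_mul]
        rw [hμsum i, ← Finset.sum_sub_distrib]
        exact Finset.sum_congr rfl fun a _ => (mul_sub _ _ _).symm
      have m2 : ∫ y, (x2 y j - μv j) ∂ν = ∑ a, O j a * (h ω a - Eh a) := by
        rw [integral_sub (hk2 j).1 (integrable_const _), (hk2 j).2, integral_const]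
        simp only [measure_univ, probReal_univ, ENNReal.toReal_one, one_smul, smul_eq_mul, one_mul]
        rw [hμsum j, ← Finset.sum_sub_distrib]
        exact Finset.sum_congr rfl fun a _ => (mul_sub _ _ _).symm
      have m3 : ∫ y, (x3 y l - μv l) ∂ν = ∑ a, O l a * (h ω a - Eh a) := by
        rw [integral_sub (hk3 l).1 (integrable_const _), (hk3 l).2, integral_const]
        simp only [measure_univ, probReal_univ, ENNReal.toReal_one, one_smul, smul_eq_mul, one_mul]
        rw [hμsum l, ← Finset.sum_sub_distrib]
        exact Finset.sum_congr rfl fun a _ => (mul_sub _ _ _).symm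
      have mo1 : Measurable fun y : Fin d → ℝ => y i - μv i :=
        (measurable_pi_apply i).sub measurable_const
      have mo2 : Measurable fun y : Fin d → ℝ => y j - μv j :=
        (measurable_pi_apply j).sub measurable_const
      have mo3 : Measurable fun y : Fin d → ℝ => y l - μv l :=
        (measurable_pi_apply l).sub measurable_const
      have hI3 : IndepFun (fun y => (x1 y i - μv i) * (x2 y j - μv j))
          (fun y => x3 y l - μv l) ν :=
        h123.comp (((measurable_pi_apply i).comp measurable_fst |>.sub measurable_const).mul
          ((measurable_pi_apply j).comp measurable_snd |>.sub measurable_const)) mo3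
      have hI2 : IndepFun (fun y => x1 y i - μv i) (fun y => x2 y j - μv j) ν :=
        h12.comp mo1 mo2
      have e3 := hI3.integral_mul_eq_mul_integral
        (((mo1.comp hx1).mul (mo2.comp hx2)).aestronglyMeasurable)
        ((mo3.comp hx3).aestronglyMeasurable)
      have e2 := hI2.integral_mul_eq_mul_integral (mo1.comp hx1).aestronglyMeasurable
        (mo2.comp hx2).aestronglyMeasurable
      have e2' : ∫ y, (x1 y i - μv i) * (x2 y j - μv j) ∂ν
          = (∫ y, (x1 y i - μv i) ∂ν) * ∫ y, (x2 y j - μv j) ∂ν := e2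
      have e3' : ∫ y, (x1 y i - μv i) * (x2 y j - μv j) * (x3 y l - μv l) ∂ν
          = (∫ y, (x1 y i - μv i) * (x2 y j - μv j) ∂ν) * ∫ y, (x3 y l - μv l) ∂ν := e3
      rw [e3', e2', m1, m2, m3]
    have expand : (fun ω => (∑ a, O i a * (h ω a - Eh a)) * (∑ a, O j a * (h ω a - Eh a))
          * (∑ a, O l a * (h ω a - Eh a)))
        = fun ω => ∑ a, ∑ b, ∑ c, (O i a * O j b * O l c)
            * ((h ω a - Eh a) * (h ω b - Eh b) * (h ω c - Eh c)) := by
      funext ω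
      rw [Finset.sum_mul_sum, Finset.sum_mul]
      refine Finset.sum_congr rfl fun a _ => ?_
      rw [Finset.sum_mul]
      refine Finset.sum_congr rfl fun b _ => ?_
      rw [Finset.mul_sum]
      exact Finset.sum_congr rfl fun c _ => by ring
    have hintabc : ∀ a b c : Fin k,
        Integrable (fun ω => (h ω a - Eh a) * (h ω b - Eh b) * (h ω c - Eh c)) P :=
      fun a b c => integrable_mul3 (hgL3 a) (hgL3 b) (hgL3 c)
    have hI1 : ∀ a b c : Fin k, Integrable (fun ω => (O i a * O j b * O l c)
        * ((h ω a - Eh a) * (h ω b - Eh b) * (h ω c - Eh c))) P :=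
      fun a b c => (hintabc a b c).const_mul _
    have hval : ∀ a b c : Fin k,
        ∫ ω, (h ω a - Eh a) * (h ω b - Eh b) * (h ω c - Eh c) ∂P
          = if b = a ∧ c = a then ∫ ω, (h ω a - Eh a) ^ 3 ∂P else 0 := by
      intro a b c
      by_cases hb : b = a ∧ c = a
      · obtain ⟨hb1, hb2⟩ := hb
        subst hb1; subst hb2
        rw [if_pos ⟨rfl, rfl⟩]
        exact integral_congr_ae (Filter.Eventually.of_forall fun ω => by ring)
      · rw [if_neg hb]
        exact triple_moment_zero hgind hgmeas hgzero a b c hb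
    rw [step1, integral_congr_ae step2, expand,
      integral_finset_sum _ (fun a _ => integrable_finset_sum _
        (fun b _ => integrable_finset_sum _ (fun c _ => hI1 a b c)))]
    refine Finset.sum_congr rfl fun a _ => ?_
    rw [integral_finset_sum _ (fun b _ => integrable_finset_sum _ (fun c _ => hI1 a b c))]
    have : ∀ b : Fin k, ∫ ω, ∑ c, (O i a * O j b * O l c)
        * ((h ω a - Eh a) * (h ω b - Eh b) * (h ω c - Eh c)) ∂P
        = ∑ c, (O i a * O j b * O l c)
            * (if b = a ∧ c = a then ∫ ω, (h ω a - Eh a) ^ 3 ∂P else 0) := by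
      intro b
      rw [integral_finset_sum _ (fun c _ => hI1 a b c)]
      exact Finset.sum_congr rfl fun c _ => by rw [integral_const_mul, hval a b c]
    simp only [this]
    simp only [mul_ite, mul_zero, ite_and]
    rw [Finset.sum_comm]
    simp only [Finset.sum_ite_eq', Finset.mem_univ, if_true, Finset.sum_ite_irrel,
      Finset.sum_const_zero, Finset.sum_ite_eq']
  -- assemble the matrix identity
  ext i j
  have hFint : ∀ l : Fin d,
      Integrable (fun ω => (x1 ω i - μv i) * (x2 ω j - μv j) * (x3 ω l - μv l)) P :=
    fun l => integrable_mul3 (hxc x1 (by simp) i) (hxc x2 (by simp) j) (hxc x3 (by simp) l)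
  have hsplit : (fun ω => (x1 ω i - μv i) * (x2 ω j - μv j)
        * (∑ l, η l * (x3 ω l - μv l)))
      = fun ω => ∑ l, η l * ((x1 ω i - μv i) * (x2 ω j - μv j) * (x3 ω l - μv l)) := by
    funext ω
    rw [Finset.mul_sum]
    exact Finset.sum_congr rfl fun l _ => by ring
  rw [Matrix.of_apply, hsplit,
    integral_finset_sum _ (fun l _ => (hFint l).const_mul _)]
  simp only [integral_const_mul]
  simp only [key]
  -- right hand side entry
  rw [Matrix.mul_apply]
  simp only [Matrix.mul_diagonal, Matrix.transpose_apply, Matrix.mulVec, dotProduct,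
    Matrix.transpose_apply]
  simp only [Finset.mul_sum]
  rw [Finset.sum_comm]
  refine Finset.sum_congr rfl fun a _ => ?_
  rw [Finset.sum_mul, Finset.sum_mul]
  exact Finset.sum_congr rfl fun l _ => by ring
end

section
/- Suppose h is an ℝ^k-valued random vector with E[h] = α/α_0 and E[h hᵀ] = (diag(α) + α αᵀ)/((α_0+1)α_0), where α ∈ ℝ^k has strictly positive entries and α_0 := α_1 + ⋯ + α_k (these are the first and second moments of the Dirichlet(α) distribution). Let x_1, x_2 be ℝ^d-valued random vectors, conditionally independent given h, with E[x_v | h] = O h for a fixed O ∈ ℝ^{d×k}, and set μ := E[x_1]. Then Pairs_{α_0} := E[x_1 x_2ᵀ] − (α_0/(α_0+1)) μ μᵀ equals (1/((α_0+1)α_0)) O diag(α) Oᵀ. -/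
open MeasureTheory ProbabilityTheory Matrix

/-- Conditional independence implies a.e. independence under the conditional
expectation kernel, for real-valued random variables. -/
lemma ae_indepFun_condExpKernel {Ω : Type*} {m' : MeasurableSpace Ω}
    [mΩ : MeasurableSpace Ω] [StandardBorelSpace Ω]
    [Nonempty Ω] {P : Measure Ω} [IsProbabilityMeasure P]
    (hm' : m' ≤ mΩ) {f g : Ω → ℝ} (hf : Measurable f) (hg : Measurable g)
    (hci : CondIndepFun m' hm' f g P) :
    ∀ᵐ ω ∂P, IndepFun f g (condExpKernel P m' ω) := by
  have hpair : ∀ᵐ ω ∂P, ∀ (q r : ℚ),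
      condExpKernel P m' ω (f ⁻¹' Set.Iic (q : ℝ) ∩ g ⁻¹' Set.Iic (r : ℝ))
        = condExpKernel P m' ω (f ⁻¹' Set.Iic (q : ℝ))
          * condExpKernel P m' ω (g ⁻¹' Set.Iic (r : ℝ)) := by
    rw [ae_all_iff]
    intro q
    rw [ae_all_iff]
    intro r
    exact ae_of_ae_trim hm' (hci _ _ ⟨Set.Iic (q : ℝ), measurableSet_Iic, rfl⟩
      ⟨Set.Iic (r : ℝ), measurableSet_Iic, rfl⟩)
  filter_upwards [hpair] with ω hω
  have hgen : (inferInstance : MeasurableSpace ℝ)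
      = MeasurableSpace.generateFrom (⋃ a : ℚ, {Set.Iic (a : ℝ)}) := by
    rw [← Real.borel_eq_generateFrom_Iic_rat]
    exact BorelSpace.measurable_eq
  have hcomap : ∀ (φ : Ω → ℝ), MeasurableSpace.comap φ inferInstance
      = MeasurableSpace.generateFrom (Set.preimage φ '' (⋃ a : ℚ, {Set.Iic (a : ℝ)})) := by
    intro φ
    conv_lhs => rw [hgen]
    rw [MeasurableSpace.comap_generateFrom]
  have hpi : ∀ (φ : Ω → ℝ), IsPiSystem (Set.preimage φ '' (⋃ a : ℚ, {Set.Iic (a : ℝ)})) := by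
    intro φ
    have h1 := Real.isPiSystem_Iic_rat.comap φ
    have : Set.preimage φ '' (⋃ a : ℚ, {Set.Iic (a : ℝ)})
        = { s : Set Ω | ∃ t ∈ (⋃ a : ℚ, {Set.Iic (a : ℝ)}), φ ⁻¹' t = s } := by
      ext s
      simp [Set.mem_image, eq_comm]
    rw [this]
    exact h1
  have hsets : ProbabilityTheory.IndepSets (Set.preimage f '' (⋃ a : ℚ, {Set.Iic (a : ℝ)}))
      (Set.preimage g '' (⋃ a : ℚ, {Set.Iic (a : ℝ)})) (condExpKernel P m' ω) := by
    rintro _ _ ⟨s, hs, rfl⟩ ⟨t, ht, rfl⟩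
    simp only [Set.mem_iUnion, Set.mem_singleton_iff] at hs ht
    obtain ⟨q, rfl⟩ := hs
    obtain ⟨r, rfl⟩ := ht
    exact ae_of_all _ fun _ => hω q r
  exact IndepSets.indep hf.comap_le hg.comap_le (hpi f) (hpi g) (hcomap f) (hcomap g) hsets



/-- LDA-type model: if `E[h] = α/α₀` and `E[h hᵀ] = (diag(α) + α αᵀ)/((α₀+1)α₀)`
(the Dirichlet(α) first and second moments), and `x₁, x₂` are conditionally independent
given `h` with `E[x_v | h] = O h`, then
`Pairs_{α₀} = E[x₁ x₂ᵀ] − (α₀/(α₀+1)) μ μᵀ = (1/((α₀+1)α₀)) O diag(α) Oᵀ`. -/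
theorem stmt_5 {Ω : Type*} [mΩ : MeasurableSpace Ω] [StandardBorelSpace Ω] [Nonempty Ω]
    (P : Measure Ω) [IsProbabilityMeasure P]
    {k d : ℕ} (h : Ω → Fin k → ℝ) (x1 x2 : Ω → Fin d → ℝ)
    (O : Matrix (Fin d) (Fin k) ℝ)
    (α : Fin k → ℝ) (α0 : ℝ) (hα : ∀ i, 0 < α i) (hα0 : α0 = ∑ i, α i)
    (hh : Measurable h) (hx1 : Measurable x1) (hx2 : Measurable x2)
    -- finite moments / integrability of the relevant quantities
    (hhmom : ∀ i, MemLp (fun ω => h ω i) 2 P)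
    (hxmom : ∀ v ∈ [x1, x2], ∀ i, MemLp (fun ω => v ω i) 2 P)
    (hxprod : ∀ i j, Integrable (fun ω => x1 ω i * x2 ω j) P)
    -- the first two moments of `h` are those of the Dirichlet(α) distribution
    (hmean : ∀ i, ∫ ω, h ω i ∂P = α i / α0)
    (hsecond : ∀ i j, ∫ ω, h ω i * h ω j ∂P
      = ((if i = j then α i else 0) + α i * α j) / ((α0 + 1) * α0))
    -- the views are conditionally independent given `h`
    (hci : CondIndepFun (MeasurableSpace.comap h inferInstance) hh.comap_le x1 x2 P)
    -- conditional means: `E[x_v | h] = O h`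
    (hm1 : ∀ i, P[(fun ω => x1 ω i)|MeasurableSpace.comap h inferInstance]
      =ᵐ[P] fun ω => ∑ l, O i l * h ω l)
    (hm2 : ∀ i, P[(fun ω => x2 ω i)|MeasurableSpace.comap h inferInstance]
      =ᵐ[P] fun ω => ∑ l, O i l * h ω l) :
    (Matrix.of fun i j => ∫ ω, x1 ω i * x2 ω j ∂P)
      - (α0 / (α0 + 1)) •
          Matrix.vecMulVec (fun i => ∫ ω, x1 ω i ∂P) (fun i => ∫ ω, x1 ω i ∂P)
      = (1 / ((α0 + 1) * α0)) • (O * Matrix.diagonal α * Oᵀ) := by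
  classical
  have hm' : MeasurableSpace.comap h inferInstance ≤ mΩ := hh.comap_le
  have hx1m : ∀ i, MemLp (fun ω => x1 ω i) 2 P := hxmom x1 (by simp)
  have hx2m : ∀ i, MemLp (fun ω => x2 ω i) 2 P := hxmom x2 (by simp)
  have hx1int : ∀ i, Integrable (fun ω => x1 ω i) P := fun i => (hx1m i).integrable one_le_two
  have hx2int : ∀ i, Integrable (fun ω => x2 ω i) P := fun i => (hx2m i).integrable one_le_two
  have hhint : ∀ l, Integrable (fun ω => h ω l) P := fun l => (hhmom l).integrable one_le_two
  have hhprod : ∀ l m, Integrable (fun ω => h ω l * h ω m) P := by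
    intro l m
    have hmem : MemLp ((fun ω => h ω l) • (fun ω => h ω m)) 1 P :=
      (hhmom m).smul (hhmom l) (p := 2) (q := 2) (r := 1)
        (hpqr := ⟨by norm_num [ENNReal.inv_two_add_inv_two]⟩)
    exact memLp_one_iff_integrable.mp hmem
  have key1 : ∀ i j, ∫ ω, x1 ω i * x2 ω j ∂P
      = ∑ l, ∑ m, O i l * O j m
          * (((if l = m then α l else 0) + α l * α m) / ((α0 + 1) * α0)) := by
    intro i j
    have hint : Integrable (fun ω => x1 ω i * x2 ω j) P := hxprod i j
    have hind : CondIndepFun (MeasurableSpace.comap h inferInstance) hm'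
        (fun ω => x1 ω i) (fun ω => x2 ω j) P :=
      hci.comp (measurable_pi_apply i) (measurable_pi_apply j)
    have hae := ae_indepFun_condExpKernel hm' ((measurable_pi_apply i).comp hx1)
      ((measurable_pi_apply j).comp hx2) hind
    have h1 : ∫ ω, x1 ω i * x2 ω j ∂P
        = ∫ ω, (∫ y, x1 y i * x2 y j
            ∂(condExpKernel P (MeasurableSpace.comap h inferInstance) ω)) ∂P := by
      rw [← integral_condExp hm' (f := fun ω => x1 ω i * x2 ω j)]
      exact integral_congr_ae (condExp_ae_eq_integral_condExpKernel hm' hint)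
    have h2 : (fun ω => ∫ y, x1 y i * x2 y j
            ∂(condExpKernel P (MeasurableSpace.comap h inferInstance) ω))
        =ᵐ[P] fun ω => (∑ l, O i l * h ω l) * (∑ m, O j m * h ω m) := by
      filter_upwards [hae,
        (hx1int i).condExpKernel_ae (m := MeasurableSpace.comap h inferInstance),
        (hx2int j).condExpKernel_ae (m := MeasurableSpace.comap h inferInstance),
        (condExp_ae_eq_integral_condExpKernel hm' (hx1int i)).symm.trans (hm1 i),
        (condExp_ae_eq_integral_condExpKernel hm' (hx2int j)).symm.trans (hm2 j)]
        with ω hωind hω1 hω2 he1 he2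
      have hmul : ∫ y, x1 y i * x2 y j
            ∂(condExpKernel P (MeasurableSpace.comap h inferInstance) ω)
          = (∫ y, x1 y i ∂(condExpKernel P (MeasurableSpace.comap h inferInstance) ω))
            * ∫ y, x2 y j ∂(condExpKernel P (MeasurableSpace.comap h inferInstance) ω) :=
        hωind.integral_fun_mul_eq_mul_integral hω1.1 hω2.1
      rw [hmul, he1, he2]
    rw [h1, integral_congr_ae h2]
    have hexp : ∀ ω, (∑ l, O i l * h ω l) * (∑ m, O j m * h ω m)
        = ∑ l, ∑ m, O i l * O j m * (h ω l * h ω m) := by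
      intro ω
      rw [Finset.sum_mul_sum]
      exact Finset.sum_congr rfl fun l _ => Finset.sum_congr rfl fun m _ => by ring
    simp_rw [hexp]
    rw [integral_finset_sum _ fun l _ =>
      integrable_finset_sum _ fun m _ => ((hhprod l m).const_mul _)]
    refine Finset.sum_congr rfl fun l _ => ?_
    rw [integral_finset_sum _ fun m _ => ((hhprod l m).const_mul _)]
    refine Finset.sum_congr rfl fun m _ => ?_
    rw [integral_const_mul, hsecond l m]
  have key2 : ∀ i, ∫ ω, x1 ω i ∂P = ∑ l, O i l * (α l / α0) := by
    intro i
    rw [← integral_condExp hm' (f := fun ω => x1 ω i), integral_congr_ae (hm1 i),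
      integral_finset_sum _ fun l _ => (hhint l).const_mul _]
    exact Finset.sum_congr rfl fun l _ => by rw [integral_const_mul, hmean l]
  ext i j
  simp only [Matrix.sub_apply, Matrix.of_apply, Matrix.smul_apply, Matrix.vecMulVec_apply,
    smul_eq_mul]
  rw [key1 i j, key2 i, key2 j]
  have hOdO : (O * Matrix.diagonal α * Oᵀ) i j = ∑ l, O i l * α l * O j l := by
    rw [Matrix.mul_apply]
    refine Finset.sum_congr rfl fun l _ => ?_
    rw [Matrix.mul_apply, Matrix.transpose_apply]
    rw [Finset.sum_eq_single l (fun m _ hm => by rw [Matrix.diagonal_apply_ne α hm, mul_zero])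
      (by simp)]
    rw [Matrix.diagonal_apply_eq]
  rw [hOdO]
  rcases isEmpty_or_nonempty (Fin k) with hk | hk
  · simp [Finset.univ_eq_empty]
  · have hα0pos : 0 < α0 := by
      rw [hα0]
      exact Finset.sum_pos (fun i _ => hα i) Finset.univ_nonempty
    have hc1 : α0 ≠ 0 := ne_of_gt hα0pos
    have hc2 : α0 + 1 ≠ 0 := by positivity
    have hsplit : ∀ l m : Fin k, O i l * O j m
          * (((if l = m then α l else 0) + α l * α m) / ((α0 + 1) * α0))
        = O i l * O j m * (if l = m then α l else 0) / ((α0 + 1) * α0)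
          + O i l * O j m * (α l * α m) / ((α0 + 1) * α0) := fun l m => by ring
    simp_rw [hsplit, Finset.sum_add_distrib]
    have hdiag : ∀ l : Fin k, ∑ m, O i l * O j m * (if l = m then α l else 0) / ((α0 + 1) * α0)
        = O i l * α l * O j l / ((α0 + 1) * α0) := by
      intro l
      rw [Finset.sum_eq_single l (fun m _ hm => by simp [if_neg (Ne.symm hm)]) (by simp)]
      rw [if_pos rfl]; ring
    simp_rw [hdiag]
    have hcross : ∑ l, ∑ m : Fin k, O i l * O j m * (α l * α m) / ((α0 + 1) * α0)
        = (∑ l, O i l * α l) * (∑ m, O j m * α m) / ((α0 + 1) * α0) := by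
      rw [Finset.sum_mul_sum, Finset.sum_div]
      refine Finset.sum_congr rfl fun l _ => ?_
      rw [Finset.sum_div]
      exact Finset.sum_congr rfl fun m _ => by ring
    rw [hcross]
    have hA : ∑ l, O i l * (α l / α0) = (∑ l, O i l * α l) / α0 := by
      rw [Finset.sum_div]
      exact Finset.sum_congr rfl fun l _ => by ring
    have hB : ∑ l, O j l * (α l / α0) = (∑ l, O j l * α l) / α0 := by
      rw [Finset.sum_div]
      exact Finset.sum_congr rfl fun l _ => by ring
    rw [hA, hB, ← Finset.sum_div]
    field_simp
    ring
end

section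
/- Let O ∈ ℝ^{d×k} have rank k, let γ ∈ ℝ^k, and suppose T : ℝ^d → ℝ^{d×d} satisfies T(η) = O diag(Oᵀη) diag(γ) Oᵀ for all η ∈ ℝ^d. Let W ∈ ℝ^{d×k} satisfy Wᵀ (O Oᵀ) W = I_k and range(W) = range(O), and set M := Wᵀ O (an orthogonal k×k matrix). Fix θ ∈ ℝ^k and set A := Wᵀ T(Wθ) W, so that A = M diag(γ_1(Mᵀθ)_1, …, γ_k(Mᵀθ)_k) Mᵀ. If i is an index such that s := |γ_i (Mᵀθ)_i| is nonzero and s ≠ |γ_j (Mᵀθ)_j| for all j ≠ i, then every unit vector λ ∈ ℝ^k with A Aᵀ λ = s² λ satisfies W(WᵀW)⁻¹ λ = O e_i or W(WᵀW)⁻¹ λ = −O e_i; that is, the left singular vector of A with singular value s recovers, via (W⁺)ᵀ, the i-th column of O up to sign. -/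
open Matrix

lemma stmt_10_aux_sym {n : ℕ} (M : Matrix (Fin n) (Fin n) ℝ) (v : Fin n → ℝ) :
    (M * Matrix.diagonal v * Mᵀ)ᵀ = M * Matrix.diagonal v * Mᵀ := by
  rw [transpose_mul, transpose_mul, transpose_transpose, diagonal_transpose, Matrix.mul_assoc]

lemma stmt_10_aux_prod {n : ℕ} (M : Matrix (Fin n) (Fin n) ℝ)
    (D E : Matrix (Fin n) (Fin n) ℝ) (h : Mᵀ * M = 1) :
    (M * D * Mᵀ) * (M * E * Mᵀ) = M * (D * E) * Mᵀ := by
  calc (M * D * Mᵀ) * (M * E * Mᵀ) = M * (D * ((Mᵀ * M) * (E * Mᵀ))) := by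
        simp only [Matrix.mul_assoc]
    _ = M * (D * (E * Mᵀ)) := by rw [h, Matrix.one_mul]
    _ = M * (D * E) * Mᵀ := by simp only [Matrix.mul_assoc]

set_option maxHeartbeats 1000000 in
/-- Correctness of skewness-based ECA: in canonical form, with `T(η) = O diag(Oᵀη) diag(γ) Oᵀ`,
a whitening matrix `W` (`Wᵀ(OOᵀ)W = I`, `range W = range O`), `M = WᵀO` and
`A = Wᵀ T(Wθ) W`, if `s = |γᵢ (Mᵀθ)ᵢ|` is nonzero and distinct from all `|γⱼ (Mᵀθ)ⱼ|`, `j ≠ i`,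
then every unit vector `λ` with `A Aᵀ λ = s² λ` satisfies `W(WᵀW)⁻¹ λ = ± O eᵢ`. -/
theorem stmt_10 {d k : ℕ}
    (O W : Matrix (Fin d) (Fin k) ℝ) (γ : Fin k → ℝ)
    (T : (Fin d → ℝ) → Matrix (Fin d) (Fin d) ℝ)
    (hT : ∀ η, T η = O * Matrix.diagonal (Oᵀ.mulVec η) * Matrix.diagonal γ * Oᵀ)
    (hO : O.rank = k)
    (hW : Wᵀ * (O * Oᵀ) * W = 1)
    (hrange : LinearMap.range W.mulVecLin = LinearMap.range O.mulVecLin)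
    (θ : Fin k → ℝ) (i : Fin k) (s : ℝ)
    (hs : s = |γ i * (Wᵀ * O)ᵀ.mulVec θ i|)
    (hs0 : s ≠ 0)
    (hsep : ∀ j, j ≠ i → s ≠ |γ j * (Wᵀ * O)ᵀ.mulVec θ j|) :
    ∀ lam : Fin k → ℝ, (∑ j, lam j ^ 2) = 1 →
      (Wᵀ * T (W.mulVec θ) * W * (Wᵀ * T (W.mulVec θ) * W)ᵀ).mulVec lam = s ^ 2 • lam →
      (W * (Wᵀ * W)⁻¹).mulVec lam = O.mulVec (Pi.single i 1) ∨
        (W * (Wᵀ * W)⁻¹).mulVec lam = -(O.mulVec (Pi.single i 1)) := by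
  intro lam hnorm heig
  set M : Matrix (Fin k) (Fin k) ℝ := Wᵀ * O with hM
  -- M is orthogonal
  have hMMt : M * Mᵀ = 1 := by
    rw [hM, transpose_mul, transpose_transpose, ← hW]
    simp only [Matrix.mul_assoc]
  have hMtM : Mᵀ * M = 1 := by
    rw [mul_eq_one_comm] at hMMt; exact hMMt
  -- t and the diagonal vector
  set t : Fin k → ℝ := Mᵀ.mulVec θ with ht
  set dv : Fin k → ℝ := fun j => t j * γ j with hdv
  have hsi : s = |dv i| := by
    show s = |t i * γ i|
    rw [hs, mul_comm]
  have hsepj : ∀ j, j ≠ i → s ≠ |dv j| := by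
    intro j hj
    show s ≠ |t j * γ j|
    rw [mul_comm]
    exact hsep j hj
  have hsge : 0 ≤ s := by rw [hsi]; exact abs_nonneg _
  -- compute A
  have hOWθ : Oᵀ.mulVec (W.mulVec θ) = t := by
    rw [ht, hM, transpose_mul, transpose_transpose, ← mulVec_mulVec]
  have hd : Matrix.diagonal t * Matrix.diagonal γ = Matrix.diagonal dv := by
    rw [diagonal_mul_diagonal]
  have hA : Wᵀ * T (W.mulVec θ) * W = M * Matrix.diagonal dv * Mᵀ := by
    rw [hT, hOWθ, hM, transpose_mul, transpose_transpose, ← hd]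
    simp only [Matrix.mul_assoc]
  have hdvsq : (fun j => dv j * dv j) = fun j => dv j ^ 2 := by
    funext j
    exact (pow_two (dv j)).symm
  have hAAt : Wᵀ * T (W.mulVec θ) * W * (Wᵀ * T (W.mulVec θ) * W)ᵀ
      = M * Matrix.diagonal (fun j => dv j ^ 2) * Mᵀ := by
    rw [hA, stmt_10_aux_sym, stmt_10_aux_prod M _ _ hMtM, diagonal_mul_diagonal, hdvsq]
  set μ : Fin k → ℝ := Mᵀ.mulVec lam with hμdef
  have heig' : ∀ j, dv j ^ 2 * μ j = s ^ 2 * μ j := by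
    intro j
    have h1 : Mᵀ.mulVec ((Wᵀ * T (W.mulVec θ) * W * (Wᵀ * T (W.mulVec θ) * W)ᵀ).mulVec lam)
        = (Matrix.diagonal (fun j => dv j ^ 2)).mulVec μ := by
      rw [hAAt, mulVec_mulVec, ← Matrix.mul_assoc, ← Matrix.mul_assoc,
        hMtM, Matrix.one_mul, ← mulVec_mulVec]
    have h2 := congrArg (Mᵀ.mulVec) heig
    rw [h1, mulVec_smul] at h2
    have h3 := congrFun h2 j
    rwa [mulVec_diagonal] at h3
  have hμ0 : ∀ j, j ≠ i → μ j = 0 := by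
    intro j hj
    have h2 : (dv j ^ 2 - s ^ 2) * μ j = 0 := by rw [sub_mul, heig' j, sub_self]
    rcases mul_eq_zero.mp h2 with h3 | h3
    · exfalso
      have h4 : dv j ^ 2 = s ^ 2 := by linarith
      have h5 : |dv j| = |s| := (sq_eq_sq_iff_abs_eq_abs _ _).mp h4
      rw [abs_of_nonneg hsge] at h5
      exact hsepj j hj h5.symm
    · exact h3
  -- norm preservation
  have hdot : μ ⬝ᵥ μ = lam ⬝ᵥ lam := by
    calc μ ⬝ᵥ μ = (μ ᵥ* Mᵀ) ⬝ᵥ lam := by rw [hμdef, dotProduct_mulVec]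
      _ = (M *ᵥ (Mᵀ *ᵥ lam)) ⬝ᵥ lam := by rw [vecMul_transpose, hμdef]
      _ = lam ⬝ᵥ lam := by rw [mulVec_mulVec, hMMt, one_mulVec]
  have hnormμ : ∑ j, μ j ^ 2 = 1 := by
    have e1 : ∑ j, μ j ^ 2 = μ ⬝ᵥ μ := by simp [dotProduct, sq]
    have e2 : ∑ j, lam j ^ 2 = lam ⬝ᵥ lam := by simp [dotProduct, sq]
    rw [e1, hdot, ← e2, hnorm]
  have hμi : μ i ^ 2 = 1 := by
    rw [← hnormμ, Finset.sum_eq_single i]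
    · intro j _ hj; rw [hμ0 j hj]; ring
    · intro h; exact absurd (Finset.mem_univ i) h
  have hμsingle : μ = μ i • (Pi.single i 1 : Fin k → ℝ) := by
    funext j
    by_cases hji : j = i
    · subst hji; simp
    · rw [hμ0 j hji]
      simp [Pi.single_eq_of_ne hji]
  have hlam : lam = M *ᵥ μ := by
    rw [hμdef, mulVec_mulVec, hMMt, one_mulVec]
  -- invertibility of WᵀW
  have hMunit : IsUnit M := by
    apply (Matrix.isUnit_iff_isUnit_det M).mpr
    apply IsUnit.of_mul_eq_one Mᵀ.det
    rw [← Matrix.det_mul, hMMt, Matrix.det_one]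
  have hrankW : W.rank = k := by
    have h1 : M.rank = k := by
      rw [Matrix.rank_of_isUnit M hMunit, Fintype.card_fin]
    have h2 : M.rank ≤ Wᵀ.rank := by rw [hM]; exact Matrix.rank_mul_le_left _ _
    have h3 : Wᵀ.rank = W.rank := Matrix.rank_transpose W
    have h4 : W.rank ≤ k := by
      have := Matrix.rank_le_card_width W
      simpa using this
    omega
  have hWtW : (Wᵀ * W).rank = k := by rw [Matrix.rank_transpose_mul_self, hrankW]
  have hWtWunit : IsUnit (Wᵀ * W) := by
    rw [← Matrix.mulVec_surjective_iff_isUnit]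
    have htop : LinearMap.range (Wᵀ * W).mulVecLin = ⊤ := by
      apply Submodule.eq_top_of_finrank_eq
      have e : Module.finrank ℝ (LinearMap.range (Wᵀ * W).mulVecLin) = (Wᵀ * W).rank := rfl
      rw [e, hWtW]
      simp
    intro v
    have hv : v ∈ LinearMap.range (Wᵀ * W).mulVecLin := htop ▸ Submodule.mem_top
    obtain ⟨u, hu⟩ := hv
    exact ⟨u, hu⟩
  have hinv : (Wᵀ * W)⁻¹ * (Wᵀ * W) = 1 :=
    Matrix.nonsing_inv_mul _ ((Matrix.isUnit_iff_isUnit_det _).mp hWtWunit)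
  -- projection identity on O eᵢ
  have hPW : W * (Wᵀ * W)⁻¹ * Wᵀ * W = W := by
    rw [Matrix.mul_assoc, Matrix.mul_assoc, hinv, Matrix.mul_one]
  have hproj : (W * (Wᵀ * W)⁻¹ * Wᵀ) *ᵥ (O *ᵥ Pi.single i 1) = O *ᵥ Pi.single i 1 := by
    have hmem : O *ᵥ Pi.single i 1 ∈ LinearMap.range W.mulVecLin := by
      rw [hrange]; exact ⟨Pi.single i 1, rfl⟩
    obtain ⟨v, hv⟩ := hmem
    have hv' : W *ᵥ v = O *ᵥ Pi.single i 1 := hv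
    rw [← hv', mulVec_mulVec, hPW]
  -- final computation
  have hstep : (W * (Wᵀ * W)⁻¹) *ᵥ (M *ᵥ Pi.single i 1) = O *ᵥ Pi.single i 1 := by
    calc (W * (Wᵀ * W)⁻¹) *ᵥ (M *ᵥ Pi.single i 1)
        = (W * (Wᵀ * W)⁻¹ * Wᵀ) *ᵥ (O *ᵥ Pi.single i 1) := by
          rw [mulVec_mulVec, mulVec_mulVec, hM]
          simp only [Matrix.mul_assoc]
      _ = O *ᵥ Pi.single i 1 := hproj
  have hkey : (W * (Wᵀ * W)⁻¹) *ᵥ lam = μ i • (O *ᵥ Pi.single i 1) := by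
    conv_lhs => rw [hlam, hμsingle]
    rw [mulVec_smul, mulVec_smul, hstep]
  have hμi' : μ i * μ i = 1 := by rw [← pow_two]; exact hμi
  rcases mul_self_eq_one_iff.mp hμi' with h1 | h1
  · left; rw [hkey, h1, one_smul]
  · right; rw [hkey, h1, neg_one_smul]
end

section
/- Let O ∈ ℝ^{d×k} have rank k, let κ ∈ ℝ^k, and suppose Q : ℝ^d × ℝ^d → ℝ^{d×d} satisfies Q(η,η′) = O diag(Oᵀη) diag(Oᵀη′) diag(κ) Oᵀ for all η, η′ ∈ ℝ^d. Let W ∈ ℝ^{d×k} satisfy Wᵀ (O Oᵀ) W = I_k and range(W) = range(O), and set M := Wᵀ O (an orthogonal k×k matrix). Fix θ, θ′ ∈ ℝ^k and set A := Wᵀ Q(Wθ, Wθ′) W, so that A = M diag(κ_1(Mᵀθ)_1(Mᵀθ′)_1, …, κ_k(Mᵀθ)_k(Mᵀθ′)_k) Mᵀ. If i is an index such that s := |κ_i (Mᵀθ)_i (Mᵀθ′)_i| is nonzero and s ≠ |κ_j (Mᵀθ)_j (Mᵀθ′)_j| for all j ≠ i, then every unit vector λ ∈ ℝ^k with A Aᵀ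 λ = s² λ satisfies W(WᵀW)⁻¹ λ = O e_i or W(WᵀW)⁻¹ λ = −O e_i. -/
open Matrix

private lemma aux_conj {k : ℕ} (M : Matrix (Fin k) (Fin k) ℝ) (v : Fin k → ℝ)
    (hM' : Mᵀ * M = 1) :
    (M * diagonal v * Mᵀ) * (M * diagonal v * Mᵀ)ᵀ
      = M * diagonal (fun j => v j * v j) * Mᵀ := by
  rw [transpose_mul, transpose_mul, diagonal_transpose, transpose_transpose]
  simp only [Matrix.mul_assoc]
  rw [← Matrix.mul_assoc Mᵀ M, hM', Matrix.one_mul,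
    ← Matrix.mul_assoc (diagonal v) (diagonal v), diagonal_mul_diagonal]

/-- Correctness of kurtosis-based ECA: in canonical form, with
`Q(η,η′) = O diag(Oᵀη) diag(Oᵀη′) diag(κ) Oᵀ`, a whitening matrix `W`
(`Wᵀ(OOᵀ)W = I`, `range W = range O`), `M = WᵀO` and `A = Wᵀ Q(Wθ, Wθ′) W`, if
`s = |κᵢ (Mᵀθ)ᵢ (Mᵀθ′)ᵢ|` is nonzero and distinct from all `|κⱼ (Mᵀθ)ⱼ (Mᵀθ′)ⱼ|`, `j ≠ i`,
then every unit vector `λ` with `A Aᵀ λ = s² λ` satisfies `W(WᵀW)⁻¹ λ = ± O eᵢ`. -/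
theorem stmt_11 {d k : ℕ}
    (O W : Matrix (Fin d) (Fin k) ℝ) (κ : Fin k → ℝ)
    (Q : (Fin d → ℝ) → (Fin d → ℝ) → Matrix (Fin d) (Fin d) ℝ)
    (hQ : ∀ η η', Q η η'
      = O * Matrix.diagonal (Oᵀ.mulVec η) * Matrix.diagonal (Oᵀ.mulVec η')
          * Matrix.diagonal κ * Oᵀ)
    (hO : O.rank = k)
    (hW : Wᵀ * (O * Oᵀ) * W = 1)
    (hrange : LinearMap.range W.mulVecLin = LinearMap.range O.mulVecLin)
    (θ θ' : Fin k → ℝ) (i : Fin k) (s : ℝ)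
    (hs : s = |κ i * (Wᵀ * O)ᵀ.mulVec θ i * (Wᵀ * O)ᵀ.mulVec θ' i|)
    (hs0 : s ≠ 0)
    (hsep : ∀ j, j ≠ i → s ≠ |κ j * (Wᵀ * O)ᵀ.mulVec θ j * (Wᵀ * O)ᵀ.mulVec θ' j|) :
    ∀ lam : Fin k → ℝ, (∑ j, lam j ^ 2) = 1 →
      (Wᵀ * Q (W.mulVec θ) (W.mulVec θ') * W
          * (Wᵀ * Q (W.mulVec θ) (W.mulVec θ') * W)ᵀ).mulVec lam = s ^ 2 • lam →
      (W * (Wᵀ * W)⁻¹).mulVec lam = O.mulVec (Pi.single i 1) ∨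
        (W * (Wᵀ * W)⁻¹).mulVec lam = -(O.mulVec (Pi.single i 1)) := by
  intro lam hnorm heig
  set M : Matrix (Fin k) (Fin k) ℝ := Wᵀ * O with hMdef
  -- M is orthogonal
  have hM : M * Mᵀ = 1 := by
    rw [hMdef, transpose_mul, transpose_transpose]
    rw [← hW]
    simp only [Matrix.mul_assoc]
  have hM' : Mᵀ * M = 1 := mul_eq_one_comm.mp hM
  -- the vector of eigenvalues
  set v : Fin k → ℝ := fun j => Mᵀ.mulVec θ j * Mᵀ.mulVec θ' j * κ j with hvdef
  -- A = M * diagonal v * Mᵀ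
  have hA : Wᵀ * Q (W.mulVec θ) (W.mulVec θ') * W = M * diagonal v * Mᵀ := by
    rw [hQ]
    have h1 : Oᵀ.mulVec (W.mulVec θ) = Mᵀ.mulVec θ := by
      rw [mulVec_mulVec, hMdef, transpose_mul, transpose_transpose]
    have h2 : Oᵀ.mulVec (W.mulVec θ') = Mᵀ.mulVec θ' := by
      rw [mulVec_mulVec, hMdef, transpose_mul, transpose_transpose]
    rw [h1, h2]
    have hDD : diagonal (Mᵀ.mulVec θ) * diagonal (Mᵀ.mulVec θ') * diagonal κ
        = (diagonal v : Matrix (Fin k) (Fin k) ℝ) := by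
      rw [diagonal_mul_diagonal, diagonal_mul_diagonal]
    rw [show O * diagonal (Mᵀ.mulVec θ) * diagonal (Mᵀ.mulVec θ') * diagonal κ
        = O * (diagonal (Mᵀ.mulVec θ) * diagonal (Mᵀ.mulVec θ') * diagonal κ) by
      simp only [Matrix.mul_assoc], hDD, hMdef, transpose_mul, transpose_transpose]
    simp only [Matrix.mul_assoc]
  -- A Aᵀ = M diag(v²) Mᵀ
  have hAA : Wᵀ * Q (W.mulVec θ) (W.mulVec θ') * W
      * (Wᵀ * Q (W.mulVec θ) (W.mulVec θ') * W)ᵀ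
      = M * diagonal (fun j => v j * v j) * Mᵀ := by
    rw [hA]; exact aux_conj M v hM'
  rw [hAA] at heig
  set μ : Fin k → ℝ := Mᵀ.mulVec lam with hμdef
  -- eigen equation for μ
  have hDμ : ∀ j, v j * v j * μ j = s ^ 2 * μ j := by
    intro j
    have h := congrArg (fun x => Mᵀ.mulVec x j) heig
    simp only [mulVec_mulVec, mulVec_smul] at h
    rw [show Mᵀ * (M * diagonal (fun j => v j * v j) * Mᵀ)
        = diagonal (fun j => v j * v j) * Mᵀ by
      simp only [← Matrix.mul_assoc, hM', Matrix.one_mul]] at h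
    simpa [← mulVec_mulVec, mulVec_diagonal, ← hμdef] using h
  -- s is positive
  have hspos : 0 < s := by
    rcases lt_or_eq_of_le (hs ▸ abs_nonneg _) with h | h
    · exact h
    · exact absurd h.symm hs0
  have hμ0 : ∀ j, j ≠ i → μ j = 0 := by
    intro j hj
    by_contra hne
    have hsq : v j * v j = s ^ 2 := mul_right_cancel₀ hne (hDμ j)
    have hvabs : s ≠ |v j| := by
      intro hc
      apply hsep j hj
      rw [hc]
      congr 1
      simp only [hvdef]
      ring
    rcases abs_cases (v j) with ⟨h1, h2⟩ | ⟨h1, h2⟩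
    · have h3 : (s - v j) * (s + v j) = 0 := by nlinarith
      rcases mul_eq_zero.mp h3 with h4 | h4
      · exact hvabs (by linarith)
      · linarith
    · have h3 : (s - v j) * (s + v j) = 0 := by nlinarith
      rcases mul_eq_zero.mp h3 with h4 | h4
      · linarith
      · exact hvabs (by linarith)
  -- lam = M *ᵥ μ
  have hlam : lam = M.mulVec μ := by
    rw [hμdef, mulVec_mulVec, hM, one_mulVec]
  -- norm of μ
  have hμnorm : μ i ^ 2 = 1 := by
    have hdot : μ ⬝ᵥ μ = lam ⬝ᵥ lam := by
      calc μ ⬝ᵥ μ = (lam ᵥ* M) ⬝ᵥ μ := by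
            rw [show lam ᵥ* M = μ by
              rw [hμdef, ← vecMul_transpose, transpose_transpose]]
        _ = lam ⬝ᵥ (M.mulVec μ) := (dotProduct_mulVec lam M μ).symm
        _ = lam ⬝ᵥ lam := by rw [← hlam]
    have h1 : μ ⬝ᵥ μ = ∑ j, μ j ^ 2 := by
      simp [dotProduct, sq]
    have h2 : lam ⬝ᵥ lam = 1 := by
      rw [show lam ⬝ᵥ lam = ∑ j, lam j ^ 2 by simp [dotProduct, sq], hnorm]
    have h3 : ∑ j, μ j ^ 2 = μ i ^ 2 := by
      rw [Finset.sum_eq_single i]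
      · intro j _ hj; rw [hμ0 j hj]; ring
      · intro h; exact absurd (Finset.mem_univ i) h
    rw [h1, h3, h2] at hdot
    exact hdot
  have hμi : μ i = 1 ∨ μ i = -1 := by
    have h : (μ i - 1) * (μ i + 1) = 0 := by linear_combination hμnorm
    rcases mul_eq_zero.mp h with h | h
    · left; linarith
    · right; linarith
  -- μ = μ i • single
  have hμsingle : μ = μ i • (Pi.single i 1 : Fin k → ℝ) := by
    funext j
    by_cases hj : j = i
    · subst hj; simp
    · simp [Pi.single_apply, hj, hμ0 j hj]
  -- injectivity of W
  have hWrank : W.rank = k := by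
    have h : W.rank = O.rank := by unfold Matrix.rank; rw [hrange]
    rw [h, hO]
  have hWinj : Function.Injective W.mulVecLin := by
    rw [← LinearMap.ker_eq_bot]
    have hrn := W.mulVecLin.finrank_range_add_finrank_ker
    rw [show Module.finrank ℝ (Fin k → ℝ) = k by simp] at hrn
    have hr : Module.finrank ℝ (LinearMap.range W.mulVecLin) = k := hWrank
    have hker0 : Module.finrank ℝ (LinearMap.ker W.mulVecLin) = 0 := by omega
    exact Submodule.finrank_eq_zero.mp hker0
  -- (WᵀW) is invertible
  have hWtWinj : Function.Injective (Wᵀ * W).mulVec := by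
    intro a b hab
    have hc : (Wᵀ * W).mulVec (a - b) = 0 := by
      rw [mulVec_sub, hab, sub_self]
    have hWc : W.mulVec (a - b) = 0 := by
      have hdot : W.mulVec (a - b) ⬝ᵥ W.mulVec (a - b) = 0 := by
        calc W.mulVec (a - b) ⬝ᵥ W.mulVec (a - b)
            = ((a - b) ᵥ* Wᵀᵀᵀ) ⬝ᵥ W.mulVec (a - b) := by
              rw [vecMul_transpose, transpose_transpose]
          _ = (a - b) ⬝ᵥ Wᵀ.mulVec (W.mulVec (a - b)) := by
              rw [transpose_transpose]; exact (dotProduct_mulVec _ _ _).symm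
          _ = (a - b) ⬝ᵥ (Wᵀ * W).mulVec (a - b) := by rw [mulVec_mulVec]
          _ = 0 := by rw [hc, dotProduct_zero]
      funext n
      have hsum : ∑ m, W.mulVec (a - b) m ^ 2 = 0 := by
        rw [← hdot]; simp [dotProduct, sq]
      have h := (Finset.sum_eq_zero_iff_of_nonneg
        (fun m _ => sq_nonneg (W.mulVec (a - b) m))).mp hsum n (Finset.mem_univ n)
      exact (pow_eq_zero_iff two_ne_zero).mp h
    have h : a - b = 0 := by
      apply hWinj
      simpa [Matrix.mulVecLin_apply] using hWc
    exact sub_eq_zero.mp h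
  have hdet : IsUnit (Wᵀ * W).det :=
    (Matrix.isUnit_iff_isUnit_det _).mp (mulVec_injective_iff_isUnit.mp hWtWinj)
  -- key computation
  obtain ⟨x, hx⟩ : O.mulVec (Pi.single i 1) ∈ LinearMap.range W.mulVecLin := by
    rw [hrange]
    exact ⟨Pi.single i 1, by simp [Matrix.mulVecLin_apply]⟩
  rw [Matrix.mulVecLin_apply] at hx
  have hkey : (W * (Wᵀ * W)⁻¹).mulVec (M.mulVec (Pi.single i 1))
      = O.mulVec (Pi.single i 1) := by
    have h1 : M.mulVec (Pi.single i 1) = (Wᵀ * W).mulVec x := by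
      rw [hMdef, ← mulVec_mulVec, ← hx, mulVec_mulVec]
    rw [h1, mulVec_mulVec, show W * (Wᵀ * W)⁻¹ * (Wᵀ * W) = W by
      rw [Matrix.mul_assoc, Matrix.nonsing_inv_mul _ hdet, Matrix.mul_one], hx]
  -- conclude
  have hfin : (W * (Wᵀ * W)⁻¹).mulVec lam = μ i • O.mulVec (Pi.single i 1) := by
    conv_lhs => rw [hlam, hμsingle]
    rw [mulVec_smul, mulVec_smul, hkey]
  rcases hμi with h | h
  · left; rw [hfin, h, one_smul]
  · right; rw [hfin, h, neg_one_smul]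
end

section
/- In the independent-factor multi-view moment model, for views v, v′ ∈ {1,2,3} one has Pairs_{v,v′} := E[(x_v − μ_v)(x_{v′} − μ_{v′})ᵀ] = O_v diag(σ_1², …, σ_k²) O_{v′}ᵀ, and for every η ∈ ℝ^{d_3}, Triples_{132}(η) := E[(x_1 − μ_1)(x_2 − μ_2)ᵀ ⟨η, x_3 − μ_3⟩] = O_1 diag(O_3ᵀ η) diag(μ_{1,3}, …, μ_{k,3}) O_2ᵀ, where σ_i² := E[(h_i − E[h_i])²] and μ_{i,3} := E[(h_i − E[h_i])³]. -/
open MeasureTheory ProbabilityTheory Matrix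

section Helpers
open Set
open scoped ENNReal

lemma aux_ae_iIndepFun {α Ω : Type*} {mα : MeasurableSpace α} {mΩ : MeasurableSpace Ω}
    {ι : Type*} [Finite ι] (κ : Kernel α Ω) (ν : Measure α) {f : ι → Ω → ℝ}
    (hf : ∀ i, Measurable (f i))
    (hK : Kernel.iIndepFun f κ ν) :
    ∀ᵐ a ∂ν, iIndepFun f (κ a) := by
  classical
  have := Fintype.ofFinite ι
  set π : ι → Set (Set Ω) := fun i => {s | ∃ q : ℚ, s = f i ⁻¹' Iio (q : ℝ)} with hπ
  have hKey : ∀ (S : Finset ι) (r : ι → ℚ),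
      ∀ᵐ a ∂ν, κ a (⋂ i ∈ S, f i ⁻¹' Iio ((r i : ℝ))) = ∏ i ∈ S, κ a (f i ⁻¹' Iio ((r i : ℝ))) := by
    intro S r
    exact (Kernel.iIndepFun_iff_measure_inter_preimage_eq_mul _ _).1 hK S
      (fun i _ => measurableSet_Iio)
  have hae : ∀ᵐ a ∂ν, ∀ (S : Finset ι) (r : ι → ℚ),
      κ a (⋂ i ∈ S, f i ⁻¹' Iio ((r i : ℝ))) = ∏ i ∈ S, κ a (f i ⁻¹' Iio ((r i : ℝ))) := by
    rw [ae_all_iff]; intro S; rw [ae_all_iff]; intro r; exact hKey S r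
  filter_upwards [hae, hK.ae_isProbabilityMeasure] with a ha hprob
  haveI := hprob
  have h_pi : ∀ i, IsPiSystem (π i) := by
    intro i s hs t ht _
    obtain ⟨q, rfl⟩ := hs; obtain ⟨q', rfl⟩ := ht
    exact ⟨min q q', by rw [← Set.preimage_inter, Set.Iio_inter_Iio, Rat.cast_min]⟩
  have h_gen : ∀ i, MeasurableSpace.comap (f i) inferInstance
      = MeasurableSpace.generateFrom (π i) := by
    intro i
    have h1 : (inferInstance : MeasurableSpace ℝ)
        = MeasurableSpace.generateFrom (⋃ q : ℚ, {Iio (q : ℝ)}) := by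
      rw [← Real.borel_eq_generateFrom_Iio_rat]; rfl
    rw [h1, MeasurableSpace.comap_generateFrom]
    congr 1
    ext s
    simp only [hπ, Set.mem_image, Set.mem_iUnion, Set.mem_singleton_iff, Set.mem_setOf_eq]
    constructor
    · rintro ⟨t, ⟨q, rfl⟩, rfl⟩; exact ⟨q, rfl⟩
    · rintro ⟨q, rfl⟩; exact ⟨_, ⟨q, rfl⟩, rfl⟩
  have h_ind : iIndepSets π (κ a) := by
    rw [iIndepSets_iff]
    intro S sets hsets
    have hr : ∀ i, ∃ q : ℚ, i ∈ S → sets i = f i ⁻¹' Iio (q : ℝ) := by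
      intro i
      by_cases hi : i ∈ S
      · obtain ⟨q, hq⟩ := hsets i hi; exact ⟨q, fun _ => hq⟩
      · exact ⟨0, fun h => absurd h hi⟩
    choose r hrr using hr
    have h1 : (⋂ i ∈ S, sets i) = ⋂ i ∈ S, f i ⁻¹' Iio ((r i : ℝ)) := by
      apply Set.iInter₂_congr; intro i hi; exact hrr i hi
    have h2 : ∏ i ∈ S, κ a (sets i) = ∏ i ∈ S, κ a (f i ⁻¹' Iio ((r i : ℝ))) :=
      Finset.prod_congr rfl fun i hi => by rw [hrr i hi]
    rw [h1, h2]; exact ha S r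
  exact h_ind.iIndep (fun i => (hf i).comap_le) π h_pi h_gen

lemma aux_int_pair {Ω : Type*} {m' : MeasurableSpace Ω} {mΩ : MeasurableSpace Ω}
    [StandardBorelSpace Ω] [Nonempty Ω]
    (P : Measure Ω) [IsProbabilityMeasure P] (hm' : m' ≤ mΩ)
    {f g cf cg : Ω → ℝ}
    (hfg : Integrable (fun ω => f ω * g ω) P) (hf : Integrable f P) (hg : Integrable g P)
    (hind : ∀ᵐ ω ∂P, IndepFun f g (condExpKernel P m' ω))
    (hcf : P[f|m'] =ᵐ[P] cf) (hcg : P[g|m'] =ᵐ[P] cg) :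
    ∫ ω, f ω * g ω ∂P = ∫ ω, cf ω * cg ω ∂P := by
  have h1 : P[fun ω => f ω * g ω|m'] =ᵐ[P]
      fun ω => ∫ y, f y * g y ∂(condExpKernel P m' ω) :=
    condExp_ae_eq_integral_condExpKernel hm' hfg
  have h2 : P[fun ω => f ω * g ω|m'] =ᵐ[P] fun ω => cf ω * cg ω := by
    have h3 := condExp_ae_eq_integral_condExpKernel hm' hf
    have h4 := condExp_ae_eq_integral_condExpKernel hm' hg
    filter_upwards [h1, hind, hf.condExpKernel_ae, hg.condExpKernel_ae,
      h3.symm.trans hcf, h4.symm.trans hcg] with ω hω hi hif hig hcf' hcg'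
    rw [hω, ← hcf', ← hcg']
    exact hi.integral_fun_mul_eq_mul_integral hif.aestronglyMeasurable hig.aestronglyMeasurable
  rw [← integral_condExp hm' (f := fun ω => f ω * g ω), integral_congr_ae h2]

lemma aux_int_triple {Ω : Type*} {m' : MeasurableSpace Ω} {mΩ : MeasurableSpace Ω}
    [StandardBorelSpace Ω] [Nonempty Ω]
    (P : Measure Ω) [IsProbabilityMeasure P] (hm' : m' ≤ mΩ)
    {f : Fin 3 → Ω → ℝ} {c : Fin 3 → Ω → ℝ}
    (hmeas : ∀ v, Measurable (f v))
    (hprod : Integrable (fun ω => f 0 ω * f 1 ω * f 2 ω) P) (hf : ∀ v, Integrable (f v) P)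
    (hind : ∀ᵐ ω ∂P, iIndepFun f (condExpKernel P m' ω))
    (hc : ∀ v, P[f v|m'] =ᵐ[P] c v) :
    ∫ ω, f 0 ω * f 1 ω * f 2 ω ∂P = ∫ ω, c 0 ω * c 1 ω * c 2 ω ∂P := by
  have h1 : P[fun ω => f 0 ω * f 1 ω * f 2 ω|m'] =ᵐ[P]
      fun ω => ∫ y, f 0 y * f 1 y * f 2 y ∂(condExpKernel P m' ω) :=
    condExp_ae_eq_integral_condExpKernel hm' hprod
  have h2 : P[fun ω => f 0 ω * f 1 ω * f 2 ω|m'] =ᵐ[P]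
      fun ω => c 0 ω * c 1 ω * c 2 ω := by
    have h3 := fun v => condExp_ae_eq_integral_condExpKernel hm' (hf v)
    filter_upwards [h1, hind, (hf 0).condExpKernel_ae, (hf 1).condExpKernel_ae,
      (hf 2).condExpKernel_ae, (h3 0).symm.trans (hc 0), (h3 1).symm.trans (hc 1),
      (h3 2).symm.trans (hc 2)] with ω hω hi hif0 hif1 hif2 hc0 hc1 hc2
    rw [hω, ← hc0, ← hc1, ← hc2]
    have h01 : IndepFun (f 0) (f 1) (condExpKernel P m' ω) := hi.indepFun (by decide)
    have h01m : IndepFun (f 0 * f 1) (f 2) (condExpKernel P m' ω) :=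
      hi.indepFun_mul_left hmeas 0 1 2 (by decide) (by decide)
    have hint01 : Integrable (f 0 * f 1) (condExpKernel P m' ω) :=
      h01.integrable_mul hif0 hif1
    have e1 : ∫ y, f 0 y * f 1 y * f 2 y ∂(condExpKernel P m' ω)
        = (∫ y, f 0 y * f 1 y ∂(condExpKernel P m' ω)) * ∫ y, f 2 y ∂(condExpKernel P m' ω) :=
      h01m.integral_fun_mul_eq_mul_integral hint01.aestronglyMeasurable hif2.aestronglyMeasurable
    have e2 : ∫ y, f 0 y * f 1 y ∂(condExpKernel P m' ω)
        = (∫ y, f 0 y ∂(condExpKernel P m' ω)) * ∫ y, f 1 y ∂(condExpKernel P m' ω) :=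
      h01.integral_fun_mul_eq_mul_integral hif0.aestronglyMeasurable hif1.aestronglyMeasurable
    rw [e1, e2]
  rw [← integral_condExp hm' (f := fun ω => f 0 ω * f 1 ω * f 2 ω), integral_congr_ae h2]

open scoped ENNReal

lemma enn1 : (1:ℝ≥0∞)/1 = 1/2 + 1/2 := by
  rw [div_one, ENNReal.div_add_div_same, show (1:ℝ≥0∞) + 1 = 2 by norm_num,
    ENNReal.div_self (by norm_num) (by norm_num)]
lemma enn2 : (1:ℝ≥0∞)/(3/2) = 1/3 + 1/3 := by
  rw [ENNReal.div_add_div_same, one_div, ENNReal.inv_div (by norm_num) (by norm_num),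
    show (1:ℝ≥0∞) + 1 = 2 by norm_num]
lemma enn3 : (1:ℝ≥0∞)/1 = 1/3 + 1/(3/2) := by
  rw [one_div (3/2 : ℝ≥0∞), ENNReal.inv_div (by norm_num) (by norm_num),
    ENNReal.div_add_div_same, show (1:ℝ≥0∞) + 2 = 3 by norm_num]
  rw [div_one, ENNReal.div_self (by norm_num) (by norm_num)]

lemma aux_L2mul {α : Type*} {mα : MeasurableSpace α} {μ : Measure α} {f g : α → ℝ}
    (hf : MemLp f 2 μ) (hg : MemLp g 2 μ) : Integrable (fun ω => f ω * g ω) μ := by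
  haveI : ENNReal.HolderTriple 2 2 1 := ⟨by simp only [← one_div]; exact enn1.symm⟩
  have h := hf.smul (φ := g) (r := 1) hg
  rw [smul_eq_mul] at h
  exact memLp_one_iff_integrable.mp (by rw [mul_comm] at h; exact h)

lemma aux_L3mul {α : Type*} {mα : MeasurableSpace α} {μ : Measure α} {f g e : α → ℝ}
    (hf : MemLp f 3 μ) (hg : MemLp g 3 μ) (he : MemLp e 3 μ) :
    Integrable (fun ω => f ω * g ω * e ω) μ := by
  have h1 : MemLp (fun ω => f ω * g ω) (3/2) μ := by
    haveI : ENNReal.HolderTriple 3 3 (3/2) := ⟨by simp only [← one_div]; exact enn2.symm⟩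
    have := hg.smul (φ := f) (r := 3/2) hf
    rw [smul_eq_mul] at this; exact this
  haveI : ENNReal.HolderTriple 3 (3/2) 1 := ⟨by simp only [← one_div]; exact enn3.symm⟩
  have h2 := h1.smul (φ := e) (r := 1) he
  refine memLp_one_iff_integrable.mp (h2.ae_eq ?_)
  filter_upwards with ω
  simp [smul_eq_mul]
  ring

lemma aux_PAIR {Ω : Type*} {m' : MeasurableSpace Ω} {mΩ : MeasurableSpace Ω}
    [StandardBorelSpace Ω] [Nonempty Ω]
    (P : Measure Ω) [IsProbabilityMeasure P] (hm' : m' ≤ mΩ)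
    {k : ℕ} (H : Fin k → Ω → ℝ) (f g : Ω → ℝ) (a b : Fin k → ℝ)
    (hH2 : ∀ s t, Integrable (fun ω => H s ω * H t ω) P)
    (hHcross : ∀ s t, s ≠ t → ∫ ω, H s ω * H t ω ∂P = 0)
    (hfg : Integrable (fun ω => f ω * g ω) P) (hf : Integrable f P) (hg : Integrable g P)
    (hind : ∀ᵐ ω ∂P, IndepFun f g (condExpKernel P m' ω))
    (hcf : P[f|m'] =ᵐ[P] fun ω => ∑ l, a l * H l ω)
    (hcg : P[g|m'] =ᵐ[P] fun ω => ∑ l, b l * H l ω) :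
    ∫ ω, f ω * g ω ∂P = ∑ t, a t * (∫ ω, H t ω ^ 2 ∂P) * b t := by
  rw [aux_int_pair P hm' hfg hf hg hind hcf hcg]
  have e1 : (fun ω => (∑ l, a l * H l ω) * (∑ l, b l * H l ω))
      = fun ω => ∑ s, ∑ t, (a s * b t) * (H s ω * H t ω) := by
    funext ω
    rw [Finset.sum_mul_sum]
    exact Finset.sum_congr rfl fun s _ => Finset.sum_congr rfl fun t _ => by ring
  calc ∫ ω, (∑ l, a l * H l ω) * (∑ l, b l * H l ω) ∂P
      = ∫ ω, ∑ s, ∑ t, (a s * b t) * (H s ω * H t ω) ∂P := by rw [e1]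
    _ = ∑ s, ∑ t, (a s * b t) * ∫ ω, H s ω * H t ω ∂P := by
        rw [integral_finset_sum _ (fun s _ => integrable_finset_sum _ fun t _ =>
          ((hH2 s t).const_mul _))]
        refine Finset.sum_congr rfl fun s _ => ?_
        rw [integral_finset_sum _ fun t _ => ((hH2 s t).const_mul _)]
        exact Finset.sum_congr rfl fun t _ => integral_const_mul _ _
    _ = ∑ t, a t * (∫ ω, H t ω ^ 2 ∂P) * b t := by
        refine Finset.sum_congr rfl fun s _ => ?_
        rw [Finset.sum_eq_single s]
        · rw [show ∫ ω, H s ω ^ 2 ∂P = ∫ ω, H s ω * H s ω ∂P from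
            integral_congr_ae (.of_forall fun ω => pow_two _)]
          ring
        · intro t _ hts
          rw [hHcross s t (Ne.symm hts), mul_zero]
        · exact fun hs => absurd (Finset.mem_univ s) hs

lemma aux_TRIPLE {Ω : Type*} {m' : MeasurableSpace Ω} {mΩ : MeasurableSpace Ω}
    [StandardBorelSpace Ω] [Nonempty Ω]
    (P : Measure Ω) [IsProbabilityMeasure P] (hm' : m' ≤ mΩ)
    {k : ℕ} (H : Fin k → Ω → ℝ) (f : Fin 3 → Ω → ℝ) (a b c : Fin k → ℝ)
    (hH3 : ∀ r s t, Integrable (fun ω => H r ω * H s ω * H t ω) P)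
    (hH3zero : ∀ r s t, ¬(r = s ∧ s = t) → ∫ ω, H r ω * H s ω * H t ω ∂P = 0)
    (hmeas : ∀ v, Measurable (f v))
    (hprod : Integrable (fun ω => f 0 ω * f 1 ω * f 2 ω) P) (hf : ∀ v, Integrable (f v) P)
    (hind : ∀ᵐ ω ∂P, iIndepFun f (condExpKernel P m' ω))
    (hc0 : P[f 0|m'] =ᵐ[P] fun ω => ∑ l, a l * H l ω)
    (hc1 : P[f 1|m'] =ᵐ[P] fun ω => ∑ l, b l * H l ω)
    (hc2 : P[f 2|m'] =ᵐ[P] fun ω => ∑ l, c l * H l ω) :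
    ∫ ω, f 0 ω * f 1 ω * f 2 ω ∂P
      = ∑ t, a t * b t * c t * ∫ ω, H t ω ^ 3 ∂P := by
  have hcv : ∀ v : Fin 3, P[f v|m'] =ᵐ[P]
      (![fun ω => ∑ l, a l * H l ω, fun ω => ∑ l, b l * H l ω,
        fun ω => ∑ l, c l * H l ω] : Fin 3 → Ω → ℝ) v := by
    intro v
    fin_cases v
    · simpa using hc0
    · simpa using hc1
    · simpa using hc2
  rw [aux_int_triple P hm' hmeas hprod hf hind hcv]
  simp only [Matrix.cons_val_zero, Matrix.cons_val_one, Matrix.head_cons,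
    Matrix.cons_val_two, Matrix.tail_cons]
  have e1 : (fun ω => (∑ l, a l * H l ω) * (∑ l, b l * H l ω) * (∑ l, c l * H l ω))
      = fun ω => ∑ r, ∑ s, ∑ t, (a r * b s * c t) * (H r ω * H s ω * H t ω) := by
    funext ω
    rw [Finset.sum_mul_sum, Finset.sum_mul]
    refine Finset.sum_congr rfl fun r _ => ?_
    rw [Finset.sum_mul]
    refine Finset.sum_congr rfl fun s _ => ?_
    rw [Finset.mul_sum]
    exact Finset.sum_congr rfl fun t _ => by ring
  calc ∫ ω, (∑ l, a l * H l ω) * (∑ l, b l * H l ω) * (∑ l, c l * H l ω) ∂P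
      = ∫ ω, ∑ r, ∑ s, ∑ t, (a r * b s * c t) * (H r ω * H s ω * H t ω) ∂P := by rw [e1]
    _ = ∑ r, ∑ s, ∑ t, (a r * b s * c t) * ∫ ω, H r ω * H s ω * H t ω ∂P := by
        rw [integral_finset_sum _ (fun r _ => integrable_finset_sum _ fun s _ =>
          integrable_finset_sum _ fun t _ => ((hH3 r s t).const_mul _))]
        refine Finset.sum_congr rfl fun r _ => ?_
        rw [integral_finset_sum _ (fun s _ => integrable_finset_sum _ fun t _ =>
          ((hH3 r s t).const_mul _))]
        refine Finset.sum_congr rfl fun s _ => ?_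
        rw [integral_finset_sum _ fun t _ => ((hH3 r s t).const_mul _)]
        exact Finset.sum_congr rfl fun t _ => integral_const_mul _ _
    _ = ∑ t, a t * b t * c t * ∫ ω, H t ω ^ 3 ∂P := by
        refine Finset.sum_congr rfl fun r _ => ?_
        rw [Finset.sum_eq_single r]
        · rw [Finset.sum_eq_single r]
          · rw [show ∫ ω, H r ω ^ 3 ∂P = ∫ ω, H r ω * H r ω * H r ω ∂P from
              integral_congr_ae (.of_forall fun ω => by ring)]
          · intro t _ htr
            rw [hH3zero r r t (fun hh => htr hh.2.symm), mul_zero]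
          · exact fun hs => absurd (Finset.mem_univ r) hs
        · intro s _ hsr
          refine Finset.sum_eq_zero fun t _ => ?_
          rw [hH3zero r s t (fun hh => hsr hh.1.symm), mul_zero]
        · exact fun hs => absurd (Finset.mem_univ r) hs

def phiAux {d : Fin 3 → ℕ} (v0 v1 v2 : Fin 3) (i : Fin (d v0)) (j : Fin (d v1)) (l : Fin (d v2))
    (a b c : ℝ) : ∀ w : Fin 3, (Fin (d w) → ℝ) → ℝ := fun w =>
  if hw : w = v0 then fun z => z (hw.symm ▸ i) - a
  else if hw : w = v1 then fun z => z (hw.symm ▸ j) - b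
  else if hw : w = v2 then fun z => z (hw.symm ▸ l) - c
  else fun _ => 0

lemma phiAux_meas {d : Fin 3 → ℕ} (v0 v1 v2 : Fin 3) (i : Fin (d v0)) (j : Fin (d v1))
    (l : Fin (d v2)) (a b c : ℝ) : ∀ w, Measurable (phiAux v0 v1 v2 i j l a b c w) := by
  intro w
  unfold phiAux
  split_ifs <;> first
    | exact (measurable_pi_apply _).sub_const _
    | exact measurable_const

lemma phiAux_fst {d : Fin 3 → ℕ} (v0 v1 v2 : Fin 3) (i : Fin (d v0)) (j : Fin (d v1))
    (l : Fin (d v2)) (a b c : ℝ) :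
    phiAux v0 v1 v2 i j l a b c v0 = fun z => z i - a := by
  unfold phiAux; rw [dif_pos rfl]

lemma phiAux_snd {d : Fin 3 → ℕ} (v0 v1 v2 : Fin 3) (i : Fin (d v0)) (j : Fin (d v1))
    (l : Fin (d v2)) (a b c : ℝ) (h10 : v1 ≠ v0) :
    phiAux v0 v1 v2 i j l a b c v1 = fun z => z j - b := by
  unfold phiAux; rw [dif_neg h10, dif_pos rfl]

lemma phiAux_thd {d : Fin 3 → ℕ} (v0 v1 v2 : Fin 3) (i : Fin (d v0)) (j : Fin (d v1))
    (l : Fin (d v2)) (a b c : ℝ) (h20 : v2 ≠ v0) (h21 : v2 ≠ v1) :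
    phiAux v0 v1 v2 i j l a b c v2 = fun z => z l - c := by
  unfold phiAux; rw [dif_neg h20, dif_neg h21, dif_pos rfl]

lemma aux_Hfacts {Ω : Type*} {mΩ : MeasurableSpace Ω} (P : Measure Ω) [IsProbabilityMeasure P]
    {k : ℕ} (H : Fin k → Ω → ℝ)
    (hind : iIndepFun H P) (hm : ∀ l, Measurable (H l))
    (hint : ∀ l, Integrable (H l) P) (h2 : ∀ s t, Integrable (fun ω => H s ω * H t ω) P)
    (h0 : ∀ l, ∫ ω, H l ω ∂P = 0) :
    (∀ s t, s ≠ t → ∫ ω, H s ω * H t ω ∂P = 0) ∧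
      (∀ r s t, ¬(r = s ∧ s = t) → ∫ ω, H r ω * H s ω * H t ω ∂P = 0) := by
  have hcross : ∀ s t, s ≠ t → ∫ ω, H s ω * H t ω ∂P = 0 := by
    intro s t hst
    have h1 : (∫ ω, H s ω * H t ω ∂P) = (∫ ω, H s ω ∂P) * ∫ ω, H t ω ∂P :=
      (hind.indepFun hst).integral_fun_mul_eq_mul_integral (hint s).aestronglyMeasurable (hint t).aestronglyMeasurable
    rw [h1, h0 s, zero_mul]
  refine ⟨hcross, ?_⟩
  intro r s t hrst
  by_cases hrs : r = s
  · subst hrs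
    have hrt : r ≠ t := fun hh => hrst ⟨rfl, hh⟩
    have h1 : (∫ ω, (H r ω * H r ω) * H t ω ∂P)
        = (∫ ω, H r ω * H r ω ∂P) * ∫ ω, H t ω ∂P :=
      (hind.indepFun_mul_left hm r r t hrt hrt).integral_fun_mul_eq_mul_integral (h2 r r).aestronglyMeasurable (hint t).aestronglyMeasurable
    have h3 : (∫ ω, H r ω * H r ω * H t ω ∂P) = ∫ ω, (H r ω * H r ω) * H t ω ∂P :=
      integral_congr_ae (.of_forall fun ω => by ring)
    rw [h3, h1, h0 t, mul_zero]
  · by_cases hst : s = t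
    · subst hst
      have h1 : (∫ ω, (H s ω * H s ω) * H r ω ∂P)
          = (∫ ω, H s ω * H s ω ∂P) * ∫ ω, H r ω ∂P :=
        (hind.indepFun_mul_left hm s s r (Ne.symm hrs) (Ne.symm hrs)).integral_fun_mul_eq_mul_integral
          (h2 s s).aestronglyMeasurable (hint r).aestronglyMeasurable
      have h3 : (∫ ω, H r ω * H s ω * H s ω ∂P) = ∫ ω, (H s ω * H s ω) * H r ω ∂P :=
        integral_congr_ae (.of_forall fun ω => by ring)
      rw [h3, h1, h0 r, mul_zero]
    · by_cases hrt : r = t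
      · subst hrt
        have h1 : (∫ ω, (H r ω * H r ω) * H s ω ∂P)
            = (∫ ω, H r ω * H r ω ∂P) * ∫ ω, H s ω ∂P :=
          (hind.indepFun_mul_left hm r r s hrs hrs).integral_fun_mul_eq_mul_integral
            (h2 r r).aestronglyMeasurable (hint s).aestronglyMeasurable
        have h3 : (∫ ω, H r ω * H s ω * H r ω ∂P) = ∫ ω, (H r ω * H r ω) * H s ω ∂P :=
          integral_congr_ae (.of_forall fun ω => by ring)
        rw [h3, h1, h0 s, mul_zero]
      · have h1 : (∫ ω, (H r ω * H s ω) * H t ω ∂P)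
            = (∫ ω, H r ω * H s ω ∂P) * ∫ ω, H t ω ∂P :=
          (hind.indepFun_mul_left hm r s t hrt hst).integral_fun_mul_eq_mul_integral
            (h2 r s).aestronglyMeasurable (hint t).aestronglyMeasurable
        have h3 : (∫ ω, H r ω * H s ω * H t ω ∂P) = ∫ ω, (H r ω * H s ω) * H t ω ∂P :=
          integral_congr_ae (.of_forall fun ω => by ring)
        rw [h3, h1, h0 t, mul_zero]

end Helpers

/-- Independent-factor multi-view moment model: for distinct views `v ≠ v′`,
`Pairs_{v,v′} = E[(x_v−μ_v)(x_{v′}−μ_{v′})ᵀ] = O_v diag(σ₁²,…,σ_k²) O_{v′}ᵀ`, and for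
every `η`, `Triples_{132}(η) = E[(x₁−μ₁)(x₂−μ₂)ᵀ⟨η,x₃−μ₃⟩]
  = O₁ diag(O₃ᵀη) diag(μ_{1,3},…,μ_{k,3}) O₂ᵀ`. -/
theorem stmt_14 {Ω : Type*} [mΩ : MeasurableSpace Ω] [StandardBorelSpace Ω] [Nonempty Ω]
    (P : Measure Ω) [IsProbabilityMeasure P]
    {k : ℕ} {d : Fin 3 → ℕ}
    (h : Ω → Fin k → ℝ) (x : ∀ v : Fin 3, Ω → Fin (d v) → ℝ)
    (O : ∀ v : Fin 3, Matrix (Fin (d v)) (Fin k) ℝ)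
    (hh : Measurable h) (hx : ∀ v, Measurable (x v))
    -- the latent factors are mutually independent, with finite moments
    (hindep : iIndepFun (m := fun _ : Fin k => (inferInstance : MeasurableSpace ℝ))
      (fun i ω => h ω i) P)
    (hhmom : ∀ i, MemLp (fun ω => h ω i) 3 P)
    (hxmom : ∀ v i, MemLp (fun ω => x v ω i) 3 P)
    (hxprod2 : ∀ v v', v ≠ v' → ∀ i j, Integrable (fun ω => x v ω i * x v' ω j) P)
    (hxprod3 : ∀ i j l,
      Integrable (fun ω => x 0 ω i * x 1 ω j * x 2 ω l) P)
    -- the views are conditionally independent given the latent factors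
    (hci : iCondIndepFun (MeasurableSpace.comap h inferInstance) hh.comap_le
      (m := fun v => inferInstance) x P)
    -- conditional means: `E[x_v | h] = O_v h`
    (hm : ∀ v i, P[(fun ω => x v ω i)|MeasurableSpace.comap h inferInstance]
      =ᵐ[P] fun ω => ∑ l, O v i l * h ω l) :
    (∀ v v', v ≠ v' →
      (Matrix.of fun i j =>
          ∫ ω, (x v ω i - ∫ ω', x v ω' i ∂P) * (x v' ω j - ∫ ω', x v' ω' j ∂P) ∂P)
        = O v * Matrix.diagonal (fun i => ∫ ω, (h ω i - ∫ ω', h ω' i ∂P) ^ 2 ∂P) * (O v')ᵀ)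
    ∧ (∀ η : Fin (d 2) → ℝ,
      (Matrix.of fun i j =>
          ∫ ω, (x 0 ω i - ∫ ω', x 0 ω' i ∂P) * (x 1 ω j - ∫ ω', x 1 ω' j ∂P)
            * (∑ l, η l * (x 2 ω l - ∫ ω', x 2 ω' l ∂P)) ∂P)
        = O 0 * Matrix.diagonal ((O 2)ᵀ.mulVec η)
            * Matrix.diagonal (fun i => ∫ ω, (h ω i - ∫ ω', h ω' i ∂P) ^ 3 ∂P) * (O 1)ᵀ) := by
  classical
  have hm'le : MeasurableSpace.comap h inferInstance ≤ mΩ := hh.comap_le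
  have hhm : ∀ l, Measurable fun ω => h ω l := fun l => (measurable_pi_apply l).comp hh
  have hhint : ∀ l, Integrable (fun ω => h ω l) P := fun l => (hhmom l).integrable (by norm_num)
  have hxint : ∀ v i, Integrable (fun ω => x v ω i) P :=
    fun v i => (hxmom v i).integrable (by norm_num)
  -- centered factor facts
  have hHm : ∀ l, Measurable fun ω => h ω l - ∫ ω', h ω' l ∂P := fun l => (hhm l).sub_const _
  have hHL3 : ∀ l, MemLp (fun ω => h ω l - ∫ ω', h ω' l ∂P) 3 P :=
    fun l => (hhmom l).sub (memLp_const _)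
  have hHint : ∀ l, Integrable (fun ω => h ω l - ∫ ω', h ω' l ∂P) P :=
    fun l => (hhint l).sub (integrable_const _)
  have hH2 : ∀ s t, Integrable
      (fun ω => (h ω s - ∫ ω', h ω' s ∂P) * (h ω t - ∫ ω', h ω' t ∂P)) P :=
    fun s t => aux_L2mul ((hHL3 s).mono_exponent (by norm_num))
      ((hHL3 t).mono_exponent (by norm_num))
  have hH3 : ∀ r s t, Integrable (fun ω => (h ω r - ∫ ω', h ω' r ∂P)
      * (h ω s - ∫ ω', h ω' s ∂P) * (h ω t - ∫ ω', h ω' t ∂P)) P :=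
    fun r s t => aux_L3mul (hHL3 r) (hHL3 s) (hHL3 t)
  have hH0 : ∀ l, (∫ ω, (h ω l - ∫ ω', h ω' l ∂P) ∂P) = 0 := by
    intro l
    rw [integral_sub (hhint l) (integrable_const _), integral_const]
    simp
  have hHindep : iIndepFun (m := fun _ : Fin k => (inferInstance : MeasurableSpace ℝ))
      (fun l ω => h ω l - ∫ ω', h ω' l ∂P) P :=
    hindep.comp (fun l => fun y : ℝ => y - ∫ ω', h ω' l ∂P)
      (fun l => measurable_id.sub_const _)
  obtain ⟨hHcross, hH3zero⟩ := aux_Hfacts P _ hHindep hHm hHint hH2 hH0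
  -- mean identity
  have hmean : ∀ v i, (∫ ω, x v ω i ∂P) = ∑ l, O v i l * ∫ ω, h ω l ∂P := by
    intro v i
    rw [← integral_condExp hm'le (f := fun ω => x v ω i), integral_congr_ae (hm v i),
      integral_finset_sum _ fun l _ => (hhint l).const_mul _]
    exact Finset.sum_congr rfl fun l _ => integral_const_mul _ _
  -- conditional expectation of centered coordinates
  have hCE : ∀ v i, P[(fun ω => x v ω i - ∫ ω', x v ω' i ∂P)|MeasurableSpace.comap h
        inferInstance]
      =ᵐ[P] fun ω => ∑ l, O v i l * (h ω l - ∫ ω', h ω' l ∂P) := by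
    intro v i
    have h1 : P[(fun ω => x v ω i - ∫ ω', x v ω' i ∂P)|MeasurableSpace.comap h inferInstance]
        =ᵐ[P] P[(fun ω => x v ω i)|MeasurableSpace.comap h inferInstance]
          - P[(fun _ => ∫ ω', x v ω' i ∂P)|MeasurableSpace.comap h inferInstance] :=
      condExp_sub (hxint v i) (integrable_const _) _
    have h2 := condExp_const hm'le (∫ ω', x v ω' i ∂P) (μ := P)
    filter_upwards [h1, hm v i] with ω h1ω hmω
    rw [h1ω, Pi.sub_apply, hmω, h2]
    show (∑ l, O v i l * h ω l) - (∫ ω', x v ω' i ∂P) = _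
    rw [hmean v i, ← Finset.sum_sub_distrib]
    exact Finset.sum_congr rfl fun l _ => (mul_sub _ _ _).symm
  -- integrability of centered products
  have hxprod2' : ∀ v v', v ≠ v' → ∀ i j, Integrable
      (fun ω => (x v ω i - ∫ ω', x v ω' i ∂P) * (x v' ω j - ∫ ω', x v' ω' j ∂P)) P := by
    intro v v' hvv' i j
    have base : Integrable (fun ω => x v ω i * x v' ω j - (∫ ω', x v ω' i ∂P) * x v' ω j
        - ((∫ ω', x v' ω' j ∂P) * x v ω i
          - (∫ ω', x v ω' i ∂P) * ∫ ω', x v' ω' j ∂P)) P :=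
      ((hxprod2 v v' hvv' i j).sub ((hxint v' j).const_mul _)).sub
        (((hxint v i).const_mul _).sub (integrable_const _))
    exact base.congr (.of_forall fun ω => by ring)
  have hxprod3' : ∀ i j l, Integrable (fun ω => (x 0 ω i - ∫ ω', x 0 ω' i ∂P)
      * (x 1 ω j - ∫ ω', x 1 ω' j ∂P) * (x 2 ω l - ∫ ω', x 2 ω' l ∂P)) P := by
    intro i j l
    have base : Integrable (fun ω =>
        x 0 ω i * x 1 ω j * x 2 ω l
        - (∫ ω', x 0 ω' i ∂P) * (x 1 ω j * x 2 ω l)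
        - ((∫ ω', x 1 ω' j ∂P) * (x 0 ω i * x 2 ω l)
          - (∫ ω', x 0 ω' i ∂P) * ((∫ ω', x 1 ω' j ∂P) * x 2 ω l))
        - ((∫ ω', x 2 ω' l ∂P) * (x 0 ω i * x 1 ω j)
          - (∫ ω', x 0 ω' i ∂P) * ((∫ ω', x 2 ω' l ∂P) * x 1 ω j)
          - ((∫ ω', x 1 ω' j ∂P) * ((∫ ω', x 2 ω' l ∂P) * x 0 ω i)
            - (∫ ω', x 0 ω' i ∂P) * ((∫ ω', x 1 ω' j ∂P) * ∫ ω', x 2 ω' l ∂P)))) P := by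
      refine Integrable.sub (Integrable.sub (Integrable.sub (hxprod3 i j l)
        ((hxprod2 1 2 (by decide) j l).const_mul _))
        (Integrable.sub ((hxprod2 0 2 (by decide) i l).const_mul _)
          (((hxint 2 l).const_mul _).const_mul _)))
        (Integrable.sub (Integrable.sub ((hxprod2 0 1 (by decide) i j).const_mul _)
          (((hxint 1 j).const_mul _).const_mul _))
          (Integrable.sub (((hxint 0 i).const_mul _).const_mul _) (integrable_const _)))
    exact base.congr (.of_forall fun ω => by ring)
  -- a.e. independence under the conditional kernel
  have hAE : ∀ (φ : ∀ w : Fin 3, (Fin (d w) → ℝ) → ℝ), (∀ w, Measurable (φ w)) →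
      ∀ᵐ ω ∂P, iIndepFun (m := fun _ : Fin 3 => (inferInstance : MeasurableSpace ℝ))
        (fun w => φ w ∘ x w)
        (condExpKernel P (MeasurableSpace.comap h inferInstance) ω) :=
    fun φ hφ => ae_of_ae_trim hm'le
      (aux_ae_iIndepFun _ _ (fun w => (hφ w).comp (hx w)) (Kernel.iIndepFun.comp hci φ hφ))
  have hPairInd : ∀ v v' (_ : v ≠ v') (i : Fin (d v)) (j : Fin (d v')),
      ∀ᵐ ω ∂P, IndepFun (fun ω' => x v ω' i - ∫ ω'', x v ω'' i ∂P)
        (fun ω' => x v' ω' j - ∫ ω'', x v' ω'' j ∂P)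
        (condExpKernel P (MeasurableSpace.comap h inferInstance) ω) := by
    intro v v' hvv' i j
    filter_upwards [hAE
      (phiAux v v' v i j i (∫ ω'', x v ω'' i ∂P) (∫ ω'', x v' ω'' j ∂P) 0)
      (phiAux_meas _ _ _ _ _ _ _ _ _)] with ω hω
    have h1 := hω.indepFun hvv'
    rw [phiAux_fst, phiAux_snd _ _ _ _ _ _ _ _ _ (Ne.symm hvv')] at h1
    exact h1
  -- key pair identity
  have key2 : ∀ v v' (_ : v ≠ v') (i : Fin (d v)) (j : Fin (d v')),
      (∫ ω, (x v ω i - ∫ ω', x v ω' i ∂P) * (x v' ω j - ∫ ω', x v' ω' j ∂P) ∂P)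
        = ∑ t, O v i t * (∫ ω, (h ω t - ∫ ω', h ω' t ∂P) ^ 2 ∂P) * O v' j t :=
    fun v v' hvv' i j => aux_PAIR P hm'le (fun l ω => h ω l - ∫ ω', h ω' l ∂P)
      (fun ω => x v ω i - ∫ ω', x v ω' i ∂P) (fun ω => x v' ω j - ∫ ω', x v' ω' j ∂P)
      (O v i) (O v' j) hH2 hHcross (hxprod2' v v' hvv' i j)
      ((hxint v i).sub (integrable_const _)) ((hxint v' j).sub (integrable_const _))
      (hPairInd v v' hvv' i j) (hCE v i) (hCE v' j)
  -- key triple identity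
  have key3 : ∀ (i : Fin (d 0)) (j : Fin (d 1)) (l : Fin (d 2)),
      (∫ ω, (x 0 ω i - ∫ ω', x 0 ω' i ∂P) * (x 1 ω j - ∫ ω', x 1 ω' j ∂P)
        * (x 2 ω l - ∫ ω', x 2 ω' l ∂P) ∂P)
        = ∑ t, O 0 i t * O 1 j t * O 2 l t * ∫ ω, (h ω t - ∫ ω', h ω' t ∂P) ^ 3 ∂P := by
    intro i j l
    set φ := phiAux 0 1 2 i j l (∫ ω', x 0 ω' i ∂P) (∫ ω', x 1 ω' j ∂P)
      (∫ ω', x 2 ω' l ∂P) with hφdef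
    have hφm : ∀ w, Measurable (φ w) := phiAux_meas _ _ _ _ _ _ _ _ _
    have hfm : ∀ w, Measurable (φ w ∘ x w) := fun w => (hφm w).comp (hx w)
    have hf0 : φ 0 ∘ x 0 = fun ω => x 0 ω i - ∫ ω', x 0 ω' i ∂P := by
      rw [hφdef, phiAux_fst]; rfl
    have hf1 : φ 1 ∘ x 1 = fun ω => x 1 ω j - ∫ ω', x 1 ω' j ∂P := by
      rw [hφdef, phiAux_snd _ _ _ _ _ _ _ _ _ (by decide)]; rfl
    have hf2 : φ 2 ∘ x 2 = fun ω => x 2 ω l - ∫ ω', x 2 ω' l ∂P := by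
      rw [hφdef, phiAux_thd _ _ _ _ _ _ _ _ _ (by decide) (by decide)]; rfl
    have hfint : ∀ w, Integrable (φ w ∘ x w) P := by
      intro w
      fin_cases w
      · rw [show ((⟨0, by norm_num⟩ : Fin 3)) = 0 from rfl, hf0]
        exact (hxint 0 i).sub (integrable_const _)
      · rw [show ((⟨1, by norm_num⟩ : Fin 3)) = 1 from rfl, hf1]
        exact (hxint 1 j).sub (integrable_const _)
      · rw [show ((⟨2, by norm_num⟩ : Fin 3)) = 2 from rfl, hf2]
        exact (hxint 2 l).sub (integrable_const _)
    have hprod' : Integrable (fun ω => (φ 0 ∘ x 0) ω * (φ 1 ∘ x 1) ω * (φ 2 ∘ x 2) ω) P := by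
      rw [hf0, hf1, hf2]; exact hxprod3' i j l
    have h1 := aux_TRIPLE P hm'le (fun l ω => h ω l - ∫ ω', h ω' l ∂P)
      (fun w => φ w ∘ x w) (O 0 i) (O 1 j) (O 2 l) hH3 hH3zero hfm hprod' hfint
      (hAE φ hφm)
      (by rw [hf0]; exact hCE 0 i)
      (by rw [hf1]; exact hCE 1 j)
      (by rw [hf2]; exact hCE 2 l)
    rw [hf0, hf1, hf2] at h1
    exact h1
  -- final assembly
  constructor
  · intro v v' hvv'
    ext i j
    have hentry : (∑ t, O v i t * (∫ ω, (h ω t - ∫ ω', h ω' t ∂P) ^ 2 ∂P) * O v' j t)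
        = (O v * Matrix.diagonal (fun t => ∫ ω, (h ω t - ∫ ω', h ω' t ∂P) ^ 2 ∂P)
            * (O v')ᵀ) i j := by
      rw [Matrix.mul_apply]
      refine Finset.sum_congr rfl fun t _ => ?_
      rw [Matrix.mul_diagonal, Matrix.transpose_apply]
    exact (key2 v v' hvv' i j).trans hentry
  · intro η
    ext i j
    have e : (fun ω => (x 0 ω i - ∫ ω', x 0 ω' i ∂P) * (x 1 ω j - ∫ ω', x 1 ω' j ∂P)
        * (∑ l, η l * (x 2 ω l - ∫ ω', x 2 ω' l ∂P)))
        = fun ω => ∑ l, η l * ((x 0 ω i - ∫ ω', x 0 ω' i ∂P)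
            * (x 1 ω j - ∫ ω', x 1 ω' j ∂P) * (x 2 ω l - ∫ ω', x 2 ω' l ∂P)) := by
      funext ω
      rw [Finset.mul_sum]
      exact Finset.sum_congr rfl fun l _ => by ring
    have hLHS : (∫ ω, (x 0 ω i - ∫ ω', x 0 ω' i ∂P) * (x 1 ω j - ∫ ω', x 1 ω' j ∂P)
        * (∑ l, η l * (x 2 ω l - ∫ ω', x 2 ω' l ∂P)) ∂P)
        = ∑ l, η l * ∑ t, O 0 i t * O 1 j t * O 2 l t
            * ∫ ω, (h ω t - ∫ ω', h ω' t ∂P) ^ 3 ∂P := by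
      rw [e, integral_finset_sum _ fun l _ => (hxprod3' i j l).const_mul _]
      refine Finset.sum_congr rfl fun l _ => ?_
      rw [integral_const_mul, key3 i j l]
    have hR : (O 0 * Matrix.diagonal ((O 2)ᵀ.mulVec η)
          * Matrix.diagonal (fun t => ∫ ω, (h ω t - ∫ ω', h ω' t ∂P) ^ 3 ∂P) * (O 1)ᵀ) i j
        = ∑ t, O 0 i t * ((∑ l, O 2 l t * η l)
            * ∫ ω, (h ω t - ∫ ω', h ω' t ∂P) ^ 3 ∂P) * O 1 j t := by
      rw [Matrix.mul_assoc (O 0), Matrix.diagonal_mul_diagonal, Matrix.mul_apply]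
      refine Finset.sum_congr rfl fun t _ => ?_
      rw [Matrix.mul_diagonal, Matrix.transpose_apply]
      simp [Matrix.mulVec, dotProduct]
    refine hLHS.trans ?_
    rw [hR]
    simp only [Finset.mul_sum, Finset.sum_mul]
    rw [Finset.sum_comm]
    exact Finset.sum_congr rfl fun t _ =>
      Finset.sum_congr rfl fun l _ => by ring
end

section
/- Let O_1 ∈ ℝ^{d_1×k}, O_2 ∈ ℝ^{d_2×k}, O_3 ∈ ℝ^{d_3×k} all have rank k, let μ₃ ∈ ℝ^k, and let A ∈ ℝ^{k×d_1}, B ∈ ℝ^{k×d_2} be such that the k×k matrices A O_1 and B O_2 are invertible. Suppose the cross moments are in canonical form: P_{v,v′} = O_v O_{v′}ᵀ for all v, v′ ∈ {1,2,3}, and T_{132}(η) = O_1 diag(O_3ᵀη) diag(μ₃) O_2ᵀ for all η ∈ ℝ^{d_3}. Define P̃_{12} := A P_{12} Bᵀ, P̃_{31} := P_{31} Aᵀ, P̃_{32} := P_{32} Bᵀ, P̃_{13} := P̃_{31}ᵀ, P̃_{23} := P̃_{32}ᵀ, T̃_{132}(η) := A T_{132}(η) Bᵀ. Then the symmetrized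 moments satisfy: Pairs_3 := P̃_{31} (P̃_{12}ᵀ)⁻¹ P̃_{23} = O_3 O_3ᵀ, and Triples_3(η) := P̃_{32} (P̃_{12})⁻¹ T̃_{132}(η) (P̃_{12})⁻¹ P̃_{13} = O_3 diag(O_3ᵀη) diag(μ₃) O_3ᵀ for every η ∈ ℝ^{d_3}. -/
open Matrix

/-- Correctness of the multi-view symmetrization: if the cross moments are in canonical
form (`P_{v,v′} = O_v O_{v′}ᵀ`, `T₁₃₂(η) = O₁ diag(O₃ᵀη) diag(μ₃) O₂ᵀ`) and `A O₁`, `B O₂`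
are invertible, then `Pairs₃ = P̃₃₁ (P̃₁₂ᵀ)⁻¹ P̃₂₃ = O₃O₃ᵀ` and
`Triples₃(η) = P̃₃₂ P̃₁₂⁻¹ T̃₁₃₂(η) P̃₁₂⁻¹ P̃₁₃ = O₃ diag(O₃ᵀη) diag(μ₃) O₃ᵀ`. -/
theorem stmt_15 {d1 d2 d3 k : ℕ}
    (O1 : Matrix (Fin d1) (Fin k) ℝ) (O2 : Matrix (Fin d2) (Fin k) ℝ)
    (O3 : Matrix (Fin d3) (Fin k) ℝ)
    (hO1 : O1.rank = k) (hO2 : O2.rank = k) (hO3 : O3.rank = k)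
    (μ3 : Fin k → ℝ)
    (A : Matrix (Fin k) (Fin d1) ℝ) (B : Matrix (Fin k) (Fin d2) ℝ)
    (hA : IsUnit (A * O1)) (hB : IsUnit (B * O2))
    (P12 : Matrix (Fin d1) (Fin d2) ℝ) (hP12 : P12 = O1 * O2ᵀ)
    (P31 : Matrix (Fin d3) (Fin d1) ℝ) (hP31 : P31 = O3 * O1ᵀ)
    (P32 : Matrix (Fin d3) (Fin d2) ℝ) (hP32 : P32 = O3 * O2ᵀ)
    (T132 : (Fin d3 → ℝ) → Matrix (Fin d1) (Fin d2) ℝ)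
    (hT132 : ∀ η, T132 η = O1 * Matrix.diagonal (O3ᵀ.mulVec η) * Matrix.diagonal μ3 * O2ᵀ) :
    (P31 * Aᵀ) * ((A * P12 * Bᵀ)ᵀ)⁻¹ * (P32 * Bᵀ)ᵀ = O3 * O3ᵀ ∧
      ∀ η, (P32 * Bᵀ) * (A * P12 * Bᵀ)⁻¹ * (A * T132 η * Bᵀ) * (A * P12 * Bᵀ)⁻¹
          * (P31 * Aᵀ)ᵀ
        = O3 * Matrix.diagonal (O3ᵀ.mulVec η) * Matrix.diagonal μ3 * O3ᵀ := by
  subst hP12 hP31 hP32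
  set M := A * O1 with hM
  set N := B * O2 with hN
  have hMd : IsUnit M.det := (Matrix.isUnit_iff_isUnit_det _).mp hA
  have hNd : IsUnit N.det := (Matrix.isUnit_iff_isUnit_det _).mp hB
  have hMdT : IsUnit Mᵀ.det := by rwa [Matrix.det_transpose]
  have hNdT : IsUnit Nᵀ.det := by rwa [Matrix.det_transpose]
  have h12 : A * (O1 * O2ᵀ) * Bᵀ = M * Nᵀ := by
    simp [hM, hN, Matrix.transpose_mul, Matrix.mul_assoc]
  have h12inv : (M * Nᵀ)⁻¹ = (Nᵀ)⁻¹ * M⁻¹ := Matrix.mul_inv_rev _ _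
  constructor
  · rw [h12]
    have : (M * Nᵀ)ᵀ⁻¹ = (Mᵀ)⁻¹ * N⁻¹ := by
      rw [Matrix.transpose_mul, Matrix.transpose_transpose, Matrix.mul_inv_rev]
    rw [this]
    calc O3 * O1ᵀ * Aᵀ * ((Mᵀ)⁻¹ * N⁻¹) * (O3 * O2ᵀ * Bᵀ)ᵀ
        = O3 * (Mᵀ * (Mᵀ)⁻¹) * (N⁻¹ * N) * O3ᵀ := by
          simp [hM, hN, Matrix.transpose_mul, Matrix.mul_assoc]
      _ = O3 * O3ᵀ := by
          rw [Matrix.mul_nonsing_inv _ hMdT, Matrix.nonsing_inv_mul _ hNd]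
          simp
  · intro η
    rw [h12, h12inv, hT132]
    have hT : A * (O1 * Matrix.diagonal (O3ᵀ.mulVec η) * Matrix.diagonal μ3 * O2ᵀ) * Bᵀ
        = M * (Matrix.diagonal (O3ᵀ.mulVec η) * Matrix.diagonal μ3) * Nᵀ := by
      simp [hM, hN, Matrix.transpose_mul, Matrix.mul_assoc]
    rw [hT]
    calc O3 * O2ᵀ * Bᵀ * ((Nᵀ)⁻¹ * M⁻¹) *
          (M * (Matrix.diagonal (O3ᵀ.mulVec η) * Matrix.diagonal μ3) * Nᵀ) *
          ((Nᵀ)⁻¹ * M⁻¹) * (O3 * O1ᵀ * Aᵀ)ᵀ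
        = O3 * (Nᵀ * (Nᵀ)⁻¹) * ((M⁻¹ * M) *
            ((Matrix.diagonal (O3ᵀ.mulVec η) * Matrix.diagonal μ3) *
              ((Nᵀ * (Nᵀ)⁻¹) * ((M⁻¹ * M) * O3ᵀ)))) := by
          simp [hM, hN, Matrix.transpose_mul, Matrix.mul_assoc]
      _ = O3 * Matrix.diagonal (O3ᵀ.mulVec η) * Matrix.diagonal μ3 * O3ᵀ := by
          rw [Matrix.mul_nonsing_inv _ hNdT, Matrix.nonsing_inv_mul _ hMd]
          simp [Matrix.mul_assoc]
end

section
/- Let v, v̂ ∈ ℝ^k be unit vectors viewed as one-dimensional subspaces, and suppose the sign of v̂ is chosen so that ⟨v, v̂⟩ ≥ 0. Let θ ∈ [0, π/2] be the principal angle between span(v) and span(v̂), so that cos θ = ⟨v, v̂⟩. Then ‖v − v̂‖₂² = 2(1 − cos θ) ≤ 2 sin² θ; in particular, if A, Â ∈ ℝ^{k×k} with ‖A − Â‖₂ ≤ E, all singular values σ_1, …, σ_k of A satisfy σ_i ≥ Δ and |σ_i − σ_{i+1}| ≥ Δ for some Δ > E, and v_i, v̂_i are corresponding left singular vectors of A and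 Â (signs chosen so ⟨v_i, v̂_i⟩ ≥ 0), then ‖v_i − v̂_i‖₂ ≤ 2√k · E/(Δ − E) for every i. -/
open Matrix
open scoped InnerProductSpace

noncomputable section

def toE {k : ℕ} (x : Fin k → ℝ) : EuclideanSpace ℝ (Fin k) := WithLp.toLp 2 x

variable {k : ℕ}

abbrev Ek (k : ℕ) := EuclideanSpace ℝ (Fin k)

@[simp] lemma toE_apply (x : Fin k → ℝ) (l : Fin k) : toE x l = x l := rfl

lemma inner_eq_sum (x y : Ek k) : ⟪x, y⟫_ℝ = ∑ l, x l * y l := by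
  simp [PiLp.inner_apply, RCLike.inner_apply, mul_comm]

lemma normsq_eq_sum (x : Ek k) : ‖x‖ ^ 2 = ∑ l, x l ^ 2 := by
  rw [← real_inner_self_eq_norm_sq, inner_eq_sum]; simp [sq]

lemma sqrt_sum_eq_norm (x : Ek k) :
    Real.sqrt (∑ l, x l ^ 2) = ‖x‖ := by
  rw [← normsq_eq_sum, Real.sqrt_sq (norm_nonneg _)]

lemma sqrt_sum_eq_norm' (x : Fin k → ℝ) :
    Real.sqrt (∑ l, x l ^ 2) = ‖toE x‖ := sqrt_sum_eq_norm (toE x)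

lemma adjoint_eq (M : Matrix (Fin k) (Fin k) ℝ) (x y : Ek k) :
    ⟪toE (M.mulVec x), y⟫_ℝ = ⟪x, toE (Mᵀ.mulVec y)⟫_ℝ := by
  rw [inner_eq_sum, inner_eq_sum]
  simp only [toE_apply]
  have h1 : ∑ l, M.mulVec x l * y l = M.mulVec x ⬝ᵥ y := rfl
  have h2 : ∑ l, x l * Mᵀ.mulVec y l = x ⬝ᵥ Mᵀ.mulVec y := rfl
  rw [h1, h2, Matrix.dotProduct_mulVec, Matrix.vecMul_transpose]

-- orthonormal from the sum condition
lemma ortho_of_sum (v : Fin k → Fin k → ℝ)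
    (h : ∀ i j, (∑ l, v i l * v j l) = if i = j then (1 : ℝ) else 0) :
    Orthonormal ℝ (fun i => toE (v i)) := by
  rw [orthonormal_iff_ite]
  intro i j
  rw [inner_eq_sum]
  simpa using h i j

def onb (v : Fin k → Ek k) (hv : Orthonormal ℝ v) : OrthonormalBasis (Fin k) ℝ (Ek k) :=
  OrthonormalBasis.mk hv (by
    have h1 : Module.finrank ℝ (Submodule.span ℝ (Set.range v)) = k := by
      rw [finrank_span_eq_card hv.linearIndependent]; simp
    have : (Submodule.span ℝ (Set.range v)) = ⊤ :=
      Submodule.eq_top_of_finrank_eq (by rw [h1]; simp)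
    rw [this])

lemma sum_repr' (v : Fin k → Ek k) (hv : Orthonormal ℝ v) (x : Ek k) :
    x = ∑ j, ⟪v j, x⟫_ℝ • v j := by
  have := (onb v hv).sum_repr' x
  simpa [onb, OrthonormalBasis.coe_mk] using this.symm

lemma parseval (v : Fin k → Ek k) (hv : Orthonormal ℝ v) (x : Ek k) :
    ∑ j, ⟪v j, x⟫_ℝ ^ 2 = ‖x‖ ^ 2 := by
  have h := ((onb v hv).repr.norm_map x).symm
  have h2 : ‖(onb v hv).repr x‖ ^ 2 = ∑ j, ((onb v hv).repr x j) ^ 2 := normsq_eq_sum _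
  calc ∑ j, ⟪v j, x⟫_ℝ ^ 2 = ∑ j, ((onb v hv).repr x j) ^ 2 := by
        congr 1; funext j
        rw [OrthonormalBasis.repr_apply_apply]
        simp [onb, OrthonormalBasis.coe_mk]
    _ = ‖(onb v hv).repr x‖ ^ 2 := h2.symm
    _ = ‖x‖ ^ 2 := by rw [h]

lemma quad_form (M : Matrix (Fin k) (Fin k) ℝ) (μ : Fin k → ℝ) (v : Fin k → Ek k)
    (hM : ∀ j, M.mulVec (v j) = μ j • (v j : Fin k → ℝ)) (hv : Orthonormal ℝ v) (x : Ek k) :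
    ⟪x, toE (M.mulVec x)⟫_ℝ = ∑ j, μ j * ⟪v j, x⟫_ℝ ^ 2 := by
  set c : Fin k → ℝ := fun j => ⟪v j, x⟫_ℝ with hc
  have hx : x = ∑ j, c j • v j := sum_repr' v hv x
  have hMx : toE (M.mulVec x) = ∑ j, (c j * μ j) • v j := by
    have hx' : x.ofLp = ∑ j, c j • (v j).ofLp := by
      conv_lhs => rw [hx]
      simp
    have hM' : M.mulVec x = ∑ j, (c j * μ j) • (v j).ofLp := by
      rw [hx', ← Matrix.mulVecLin_apply, map_sum]
      simp only [map_smul, Matrix.mulVecLin_apply, hM, smul_smul]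
    apply WithLp.ofLp_injective
    simp [toE, hM']
  rw [hMx, inner_sum]
  congr 1; funext j
  rw [real_inner_smul_right, real_inner_comm]
  ring

lemma normsq_transpose (M : Matrix (Fin k) (Fin k) ℝ) (x : Ek k) :
    ‖toE (Mᵀ.mulVec x)‖ ^ 2 = ⟪x, toE ((M * Mᵀ).mulVec x)⟫_ℝ := by
  rw [← real_inner_self_eq_norm_sq]
  have h := adjoint_eq Mᵀ x (toE (Mᵀ.mulVec x))
  have h2 : Mᵀᵀ.mulVec (toE (Mᵀ.mulVec x)) = (M * Mᵀ).mulVec x := by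
    rw [Matrix.transpose_transpose]
    show M.mulVec (Mᵀ.mulVec x) = _
    rw [Matrix.mulVec_mulVec]
  calc ⟪toE (Mᵀ.mulVec x), toE (Mᵀ.mulVec x)⟫_ℝ
      = ⟪x, toE (Mᵀᵀ.mulVec (toE (Mᵀ.mulVec x)))⟫_ℝ := by
        rw [← h]
    _ = ⟪x, toE ((M * Mᵀ).mulVec x)⟫_ℝ := by rw [h2]

-- transpose operator bound
lemma op_transpose (M : Matrix (Fin k) (Fin k) ℝ) (E : ℝ) (hE : 0 ≤ E)
    (h : ∀ x : Ek k, ‖toE (M.mulVec x)‖ ≤ E * ‖x‖) (x : Ek k) :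
    ‖toE (Mᵀ.mulVec x)‖ ≤ E * ‖x‖ := by
  set y : Ek k := toE (Mᵀ.mulVec x) with hy
  rcases eq_or_lt_of_le (norm_nonneg y) with h0 | h0
  · rw [← h0]; positivity
  · have h1 : ‖y‖ ^ 2 = ⟪toE (M.mulVec y), x⟫_ℝ := by
      rw [← real_inner_self_eq_norm_sq, adjoint_eq M y x, real_inner_comm]
    have h2 : ⟪toE (M.mulVec y), x⟫_ℝ ≤ ‖toE (M.mulVec y)‖ * ‖x‖ :=
      real_inner_le_norm _ _
    have h3 : ‖toE (M.mulVec y)‖ ≤ E * ‖y‖ := h y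
    have h4 : ‖y‖ * ‖y‖ ≤ ‖y‖ * (E * ‖x‖) := by nlinarith [norm_nonneg x]
    exact le_of_mul_le_mul_left h4 h0

-- coefficients vanish outside the spanning index set
lemma coeff_zero (v : Fin k → Ek k) (hv : Orthonormal ℝ v) (s : Finset (Fin k))
    (x : Ek k) (hx : x ∈ Submodule.span ℝ (v '' ↑s)) (j : Fin k) (hj : j ∉ s) :
    ⟪v j, x⟫_ℝ = 0 := by
  induction hx using Submodule.span_induction with
  | mem y hy =>
      obtain ⟨m, hm, rfl⟩ := hy
      have hne : j ≠ m := by rintro rfl; exact hj hm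
      have := orthonormal_iff_ite.mp hv j m
      simpa [hne] using this
  | zero => exact inner_zero_right _
  | add y z _ _ hy hz => rw [inner_add_right, hy, hz, add_zero]
  | smul c y _ hy => rw [real_inner_smul_right, hy, mul_zero]
open Matrix
open scoped InnerProductSpace

section
variable {k : ℕ}


lemma rayleigh_lower (A : Matrix (Fin k) (Fin k) ℝ) (σ : Fin k → ℝ) (v : Fin k → Fin k → ℝ)
    (hσ0 : ∀ i, 0 ≤ σ i) (hσs : ∀ i j, i ≤ j → σ j ≤ σ i)
    (hv : ∀ i, (A * Aᵀ).mulVec (v i) = σ i ^ 2 • v i)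
    (ho : Orthonormal ℝ (fun i => toE (v i)))
    (i : Fin k) (x : Ek k) (hx1 : ‖x‖ = 1)
    (hxU : x ∈ Submodule.span ℝ ((fun j => toE (v j)) '' ↑(Finset.Iic i))) :
    σ i ≤ ‖toE (Aᵀ.mulVec x)‖ := by
  set c : Fin k → ℝ := fun j => ⟪toE (v j), x⟫_ℝ with hc
  have hq : ‖toE (Aᵀ.mulVec x)‖ ^ 2 = ∑ j, σ j ^ 2 * c j ^ 2 := by
    rw [normsq_transpose]
    exact quad_form (A * Aᵀ) (fun j => σ j ^ 2) (fun j => toE (v j)) (fun j => hv j) ho x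
  have hcz : ∀ j, j ∉ Finset.Iic i → c j = 0 := fun j hj =>
    coeff_zero _ ho (Finset.Iic i) x hxU j hj
  have hpar : ∑ j, c j ^ 2 = 1 := by
    rw [hc]; rw [parseval _ ho x, hx1]; norm_num
  have hge : σ i ^ 2 ≤ ∑ j, σ j ^ 2 * c j ^ 2 := by
    calc σ i ^ 2 = ∑ j, σ i ^ 2 * c j ^ 2 := by rw [← Finset.mul_sum, hpar, mul_one]
      _ ≤ ∑ j, σ j ^ 2 * c j ^ 2 := by
          apply Finset.sum_le_sum
          intro j _
          by_cases hj : j ∈ Finset.Iic i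
          · have h5 : σ i ^ 2 ≤ σ j ^ 2 := pow_le_pow_left₀ (hσ0 i) (hσs j i (Finset.mem_Iic.mp hj)) 2
            exact mul_le_mul_of_nonneg_right h5 (sq_nonneg _)
          · rw [hcz j hj]; simp
  have : σ i ^ 2 ≤ ‖toE (Aᵀ.mulVec x)‖ ^ 2 := by rw [hq]; exact hge
  calc σ i = Real.sqrt (σ i ^ 2) := (Real.sqrt_sq (hσ0 i)).symm
    _ ≤ Real.sqrt (‖toE (Aᵀ.mulVec x)‖ ^ 2) := Real.sqrt_le_sqrt this
    _ = ‖toE (Aᵀ.mulVec x)‖ := Real.sqrt_sq (norm_nonneg _)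

lemma rayleigh_upper (A : Matrix (Fin k) (Fin k) ℝ) (σ : Fin k → ℝ) (v : Fin k → Fin k → ℝ)
    (hσ0 : ∀ i, 0 ≤ σ i) (hσs : ∀ i j, i ≤ j → σ j ≤ σ i)
    (hv : ∀ i, (A * Aᵀ).mulVec (v i) = σ i ^ 2 • v i)
    (ho : Orthonormal ℝ (fun i => toE (v i)))
    (i : Fin k) (x : Ek k) (hx1 : ‖x‖ = 1)
    (hxU : x ∈ Submodule.span ℝ ((fun j => toE (v j)) '' ↑(Finset.Ici i))) :
    ‖toE (Aᵀ.mulVec x)‖ ≤ σ i := by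
  set c : Fin k → ℝ := fun j => ⟪toE (v j), x⟫_ℝ with hc
  have hq : ‖toE (Aᵀ.mulVec x)‖ ^ 2 = ∑ j, σ j ^ 2 * c j ^ 2 := by
    rw [normsq_transpose]
    exact quad_form (A * Aᵀ) (fun j => σ j ^ 2) (fun j => toE (v j)) (fun j => hv j) ho x
  have hcz : ∀ j, j ∉ Finset.Ici i → c j = 0 := fun j hj =>
    coeff_zero _ ho (Finset.Ici i) x hxU j hj
  have hpar : ∑ j, c j ^ 2 = 1 := by
    rw [hc]; rw [parseval _ ho x, hx1]; norm_num
  have hge : ∑ j, σ j ^ 2 * c j ^ 2 ≤ σ i ^ 2 := by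
    calc ∑ j, σ j ^ 2 * c j ^ 2 ≤ ∑ j, σ i ^ 2 * c j ^ 2 := by
          apply Finset.sum_le_sum
          intro j _
          by_cases hj : j ∈ Finset.Ici i
          · have h5 : σ j ^ 2 ≤ σ i ^ 2 := pow_le_pow_left₀ (hσ0 j) (hσs i j (Finset.mem_Ici.mp hj)) 2
            exact mul_le_mul_of_nonneg_right h5 (sq_nonneg _)
          · rw [hcz j hj]; simp
      _ = σ i ^ 2 := by rw [← Finset.mul_sum, hpar, mul_one]
  have h2 : ‖toE (Aᵀ.mulVec x)‖ ^ 2 ≤ σ i ^ 2 := by rw [hq]; exact hge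
  calc ‖toE (Aᵀ.mulVec x)‖ = Real.sqrt (‖toE (Aᵀ.mulVec x)‖ ^ 2) :=
        (Real.sqrt_sq (norm_nonneg _)).symm
    _ ≤ Real.sqrt (σ i ^ 2) := Real.sqrt_le_sqrt h2
    _ = σ i := Real.sqrt_sq (hσ0 i)

end

lemma weyl_one (A Ahat : Matrix (Fin k) (Fin k) ℝ) (E : ℝ) (hE0 : 0 ≤ E)
    (hE : ∀ x : Ek k, ‖toE ((A - Ahat)ᵀ.mulVec x)‖ ≤ E * ‖x‖)
    (σ σhat : Fin k → ℝ) (v vhat : Fin k → Fin k → ℝ)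
    (hσ0 : ∀ i, 0 ≤ σ i) (hσs : ∀ i j, i ≤ j → σ j ≤ σ i)
    (hσhat0 : ∀ i, 0 ≤ σhat i) (hσhats : ∀ i j, i ≤ j → σhat j ≤ σhat i)
    (hv : ∀ i, (A * Aᵀ).mulVec (v i) = σ i ^ 2 • v i)
    (hvhat : ∀ i, (Ahat * Ahatᵀ).mulVec (vhat i) = σhat i ^ 2 • vhat i)
    (ho : Orthonormal ℝ (fun i => toE (v i)))
    (hohat : Orthonormal ℝ (fun i => toE (vhat i)))
    (i : Fin k) : σ i ≤ σhat i + E := by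
  classical
  set U : Submodule ℝ (Ek k) :=
    Submodule.span ℝ ((fun j => toE (v j)) '' ↑(Finset.Iic i)) with hU
  set V : Submodule ℝ (Ek k) :=
    Submodule.span ℝ ((fun j => toE (vhat j)) '' ↑(Finset.Ici i)) with hV
  -- dimensions
  have hrU : Module.finrank ℝ U = (i : ℕ) + 1 := by
    have hset : Set.range ((fun j => toE (v j)) ∘
        (Subtype.val : {j // j ∈ Finset.Iic i} → Fin k)) =
        (fun j => toE (v j)) '' ↑(Finset.Iic i) := by
      rw [Set.range_comp]
      congr 1
      ext y; simp
    rw [hU, ← hset, finrank_span_eq_card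
      (ho.linearIndependent.comp Subtype.val Subtype.val_injective)]
    rw [Fintype.card_coe, Fin.card_Iic]
  have hrV : Module.finrank ℝ V = k - (i : ℕ) := by
    have hset : Set.range ((fun j => toE (vhat j)) ∘
        (Subtype.val : {j // j ∈ Finset.Ici i} → Fin k)) =
        (fun j => toE (vhat j)) '' ↑(Finset.Ici i) := by
      rw [Set.range_comp]
      congr 1
      ext y; simp
    rw [hV, ← hset, finrank_span_eq_card
      (hohat.linearIndependent.comp Subtype.val Subtype.val_injective)]
    rw [Fintype.card_coe, Fin.card_Ici]
  have hsum : Module.finrank ℝ U + Module.finrank ℝ V = k + 1 := by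
    rw [hrU, hrV]
    have := i.isLt
    omega
  have hinf : 0 < Module.finrank ℝ ↥(U ⊓ V) := by
    have h1 := Submodule.finrank_sup_add_finrank_inf_eq U V
    have h2 : Module.finrank ℝ ↥(U ⊔ V) ≤ k := by
      have := Submodule.finrank_le (U ⊔ V)
      simpa using this
    omega
  haveI := Module.nontrivial_of_finrank_pos hinf
  obtain ⟨y, hy0⟩ := exists_ne (0 : ↥(U ⊓ V))
  have hyne : (y : Ek k) ≠ 0 := by
    intro h; apply hy0; exact Subtype.ext h
  set x : Ek k := ‖(y : Ek k)‖⁻¹ • (y : Ek k) with hx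
  have hnx : ‖x‖ = 1 := norm_smul_inv_norm hyne
  have hxUV : x ∈ U ⊓ V := Submodule.smul_mem _ _ y.2
  have h1 : σ i ≤ ‖toE (Aᵀ.mulVec x)‖ :=
    rayleigh_lower A σ v hσ0 hσs hv ho i x hnx hxUV.1
  have h2 : ‖toE (Ahatᵀ.mulVec x)‖ ≤ σhat i :=
    rayleigh_upper Ahat σhat vhat hσhat0 hσhats hvhat hohat i x hnx hxUV.2
  have h3 : toE (Aᵀ.mulVec x) = toE (Ahatᵀ.mulVec x) + toE ((A - Ahat)ᵀ.mulVec x) := by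
    apply WithLp.ofLp_injective
    simp [toE, Matrix.transpose_sub, Matrix.sub_mulVec]
  have h4 : ‖toE (Aᵀ.mulVec x)‖ ≤ σhat i + E := by
    rw [h3]
    calc ‖toE (Ahatᵀ.mulVec x) + toE ((A - Ahat)ᵀ.mulVec x)‖
        ≤ ‖toE (Ahatᵀ.mulVec x)‖ + ‖toE ((A - Ahat)ᵀ.mulVec x)‖ := norm_add_le _ _
      _ ≤ σhat i + E * ‖x‖ := add_le_add h2 (hE x)
      _ = σhat i + E := by rw [hnx, mul_one]
  linarith

@[simp] lemma toE_smul (r : ℝ) (x : Fin k → ℝ) : toE (r • x) = r • toE x := rfl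
@[simp] lemma toE_add (x y : Fin k → ℝ) : toE (x + y) = toE x + toE y := rfl
@[simp] lemma toE_sub (x y : Fin k → ℝ) : toE (x - y) = toE x - toE y := rfl

-- gap between non-equal indices
lemma gap_ge (Δ : ℝ) (σ : Fin k → ℝ) (hs : ∀ i j : Fin k, i ≤ j → σ j ≤ σ i)
    (hgap : ∀ i j : Fin k, (j : ℕ) = (i : ℕ) + 1 → |σ i - σ j| ≥ Δ)
    (i j : Fin k) (hne : j ≠ i) : Δ ≤ |σ j - σ i| := by
  rcases lt_or_gt_of_ne (fun h => hne (Fin.ext h) : (j : ℕ) ≠ (i : ℕ)) with hlt | hlt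
  · -- j < i : σ j ≥ σ i + Δ
    have hj1 : (j : ℕ) + 1 < k := lt_of_le_of_lt hlt i.isLt
    set j' : Fin k := ⟨(j : ℕ) + 1, hj1⟩ with hj'
    have hg := hgap j j' rfl
    have h1 : σ j' ≤ σ j := hs j j' (by simp [Fin.le_def, hj'])
    have h2 : σ i ≤ σ j' := hs j' i (by simp [Fin.le_def, hj']; omega)
    rw [abs_of_nonneg (by linarith)] at hg
    rw [abs_of_nonneg (by linarith)]
    linarith
  · -- i < j : σ i ≥ σ j + Δ
    have hi1 : (i : ℕ) + 1 < k := lt_of_le_of_lt hlt j.isLt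
    set i' : Fin k := ⟨(i : ℕ) + 1, hi1⟩ with hi'
    have hg := hgap i i' rfl
    have h1 : σ i' ≤ σ i := hs i i' (by simp [Fin.le_def, hi'])
    have h2 : σ j ≤ σ i' := hs i' j (by simp [Fin.le_def, hi']; omega)
    rw [abs_of_nonneg (by linarith)] at hg
    rw [abs_of_nonpos (by linarith), neg_sub]
    linarith


/-- (a) For unit vectors `v, v̂` with `⟨v,v̂⟩ ≥ 0` and principal angle `θ ∈ [0,π/2]`
(`cos θ = ⟨v,v̂⟩`): `‖v−v̂‖² = 2(1−cos θ) ≤ 2 sin² θ`.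
(b) If `‖A−Â‖₂ ≤ E` (spectral norm), the singular values of `A` (sorted decreasingly,
with orthonormal left singular vectors `vᵢ`) satisfy `σᵢ ≥ Δ` and adjacent gaps
`|σᵢ−σᵢ₊₁| ≥ Δ` for some `Δ > E`, and `v̂ᵢ` are corresponding left singular vectors of `Â`
(signs chosen so `⟨vᵢ,v̂ᵢ⟩ ≥ 0`), then `‖vᵢ−v̂ᵢ‖₂ ≤ 2√k·E/(Δ−E)` for every `i`. -/
theorem stmt_19 {k : ℕ}
    (A Ahat : Matrix (Fin k) (Fin k) ℝ) (E Δ : ℝ)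
    -- spectral norm bound `‖A − Â‖₂ ≤ E`
    (hAE : ∀ x : Fin k → ℝ,
      Real.sqrt (∑ l, ((A - Ahat).mulVec x l) ^ 2) ≤ E * Real.sqrt (∑ l, x l ^ 2))
    (hΔE : E < Δ)
    (σ σhat : Fin k → ℝ)
    (v vhat : Fin k → Fin k → ℝ)
    -- `σ` lists the singular values of `A` in decreasing order, with orthonormal
    -- left singular vectors `v i`
    (hσnonneg : ∀ i, 0 ≤ σ i) (hσsorted : ∀ i j, i ≤ j → σ j ≤ σ i)
    (hv : ∀ i, (A * Aᵀ).mulVec (v i) = σ i ^ 2 • v i)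
    (hvortho : ∀ i j, (∑ l, v i l * v j l) = if i = j then (1 : ℝ) else 0)
    -- `σ̂`, `v̂ i` likewise for `Â`
    (hσhatnonneg : ∀ i, 0 ≤ σhat i) (hσhatsorted : ∀ i j, i ≤ j → σhat j ≤ σhat i)
    (hvhat : ∀ i, (Ahat * Ahatᵀ).mulVec (vhat i) = σhat i ^ 2 • vhat i)
    (hvhatortho : ∀ i j, (∑ l, vhat i l * vhat j l) = if i = j then (1 : ℝ) else 0)
    -- the singular values of `A` are at least `Δ` and have adjacent gaps at least `Δ`
    (hσΔ : ∀ i, σ i ≥ Δ)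
    (hgap : ∀ i j : Fin k, (j : ℕ) = (i : ℕ) + 1 → |σ i - σ j| ≥ Δ)
    -- signs chosen so that `⟨vᵢ, v̂ᵢ⟩ ≥ 0`
    (hsign : ∀ i, 0 ≤ ∑ l, v i l * vhat i l) :
    -- (a)
    (∀ (w what : Fin k → ℝ) (θ : ℝ),
      (∑ l, w l ^ 2) = 1 → (∑ l, what l ^ 2) = 1 → 0 ≤ ∑ l, w l * what l →
      θ ∈ Set.Icc 0 (Real.pi / 2) → Real.cos θ = ∑ l, w l * what l →
      (∑ l, (w l - what l) ^ 2) = 2 * (1 - Real.cos θ) ∧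
        2 * (1 - Real.cos θ) ≤ 2 * Real.sin θ ^ 2)
    -- (b)
    ∧ ∀ i, Real.sqrt (∑ l, (v i l - vhat i l) ^ 2) ≤ 2 * Real.sqrt k * E / (Δ - E) := by
  constructor
  · -- part (a)
    intro w what θ hw hwhat hpos _ hcos
    constructor
    · have hexp : ∀ l, (w l - what l) ^ 2 = w l ^ 2 + what l ^ 2 - 2 * (w l * what l) := by
        intro l; ring
      calc ∑ l, (w l - what l) ^ 2
          = ∑ l, (w l ^ 2 + what l ^ 2 - 2 * (w l * what l)) :=
            Finset.sum_congr rfl (fun l _ => hexp l)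
        _ = (∑ l, w l ^ 2) + (∑ l, what l ^ 2) - 2 * ∑ l, w l * what l := by
            rw [Finset.sum_sub_distrib, Finset.sum_add_distrib, ← Finset.mul_sum]
        _ = 2 * (1 - Real.cos θ) := by rw [hw, hwhat, ← hcos]; ring
    · have h1 : Real.sin θ ^ 2 = 1 - Real.cos θ ^ 2 := Real.sin_sq θ
      have h2 : 0 ≤ Real.cos θ := hcos ▸ hpos
      have h3 : Real.cos θ ≤ 1 := Real.cos_le_one θ
      nlinarith
  · -- part (b)
    intro i
    classical
    -- basic facts
    have ho := ortho_of_sum v hvortho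
    have hohat := ortho_of_sum vhat hvhatortho
    have hunit : ∀ j, ‖toE (v j)‖ = 1 := by
      intro j
      have h1 : ‖toE (v j)‖ ^ 2 = 1 := by
        rw [normsq_eq_sum]
        simp only [toE_apply, pow_two]
        simpa using hvortho j j
      nlinarith [norm_nonneg (toE (v j))]
    have hunithat : ∀ j, ‖toE (vhat j)‖ = 1 := by
      intro j
      have h1 : ‖toE (vhat j)‖ ^ 2 = 1 := by
        rw [normsq_eq_sum]
        simp only [toE_apply, pow_two]
        simpa using hvhatortho j j
      nlinarith [norm_nonneg (toE (vhat j))]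
    -- spectral norm bound, Euclidean form
    have hAE'' : ∀ x : Fin k → ℝ, ‖toE ((A - Ahat).mulVec x)‖ ≤ E * ‖toE x‖ := by
      intro x
      have h := hAE x
      rwa [sqrt_sum_eq_norm' ((A - Ahat).mulVec x), sqrt_sum_eq_norm' x] at h
    have hAE' : ∀ x : Ek k, ‖toE ((A - Ahat).mulVec x)‖ ≤ E * ‖x‖ := fun x => hAE'' x
    have hE0 : 0 ≤ E := by
      have h := hAE' (toE (v i))
      rw [hunit i, mul_one] at h
      exact le_trans (norm_nonneg _) h
    have hAET : ∀ x : Ek k, ‖toE ((A - Ahat)ᵀ.mulVec x)‖ ≤ E * ‖x‖ :=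
      op_transpose (A - Ahat) E hE0 hAE'
    have hAET' : ∀ x : Ek k, ‖toE ((Ahat - A)ᵀ.mulVec x)‖ ≤ E * ‖x‖ := by
      intro x
      have h1 : toE ((Ahat - A)ᵀ.mulVec x) = -toE ((A - Ahat)ᵀ.mulVec x) := by
        rw [← neg_sub A Ahat, Matrix.transpose_neg, Matrix.neg_mulVec]
        rfl
      rw [h1, norm_neg]
      exact hAET x
    -- Weyl
    have hweyl : |σ i - σhat i| ≤ E := by
      have h1 : σ i ≤ σhat i + E :=
        weyl_one A Ahat E hE0 hAET σ σhat v vhat hσnonneg hσsorted hσhatnonneg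
          hσhatsorted hv hvhat ho hohat i
      have h2 : σhat i ≤ σ i + E :=
        weyl_one Ahat A E hE0 hAET' σhat σ vhat v hσhatnonneg hσhatsorted hσnonneg
          hσsorted hvhat hv hohat ho i
      rw [abs_le]; constructor <;> linarith
    -- coefficients
    set c : Fin k → ℝ := fun j => ⟪toE (v j), toE (vhat i)⟫_ℝ with hc
    have hcisum : c i = ∑ l, v i l * vhat i l := by
      simp only [hc]
      rw [inner_eq_sum]
      simp only [toE_apply]
    have hpar : ∑ j, c j ^ 2 = 1 := by
      rw [hc, parseval _ ho (toE (vhat i)), hunithat i]; norm_num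
    have hci0 : 0 ≤ c i := by
      rw [hcisum]; exact hsign i
    have hci1 : c i ≤ 1 := by
      have h1 : c i ^ 2 ≤ ∑ j, c j ^ 2 :=
        Finset.single_le_sum (fun j _ => sq_nonneg (c j)) (Finset.mem_univ i)
      rw [hpar] at h1
      nlinarith
    -- norms of transposed images
    have hnAv : ∀ j, ‖toE (Aᵀ.mulVec (toE (v j)))‖ = σ j := by
      intro j
      have h1 : ‖toE (Aᵀ.mulVec (toE (v j)))‖ ^ 2 = σ j ^ 2 := by
        rw [normsq_transpose A (toE (v j))]
        have h2 : toE ((A * Aᵀ).mulVec (toE (v j))) = σ j ^ 2 • toE (v j) := by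
          rw [← toE_smul]; exact congrArg toE (hv j)
        rw [h2, real_inner_smul_right, real_inner_self_eq_norm_sq, hunit j]
        ring
      have := norm_nonneg (toE (Aᵀ.mulVec (toE (v j))))
      nlinarith [hσnonneg j]
    have hnAhat : ‖toE (Ahatᵀ.mulVec (toE (vhat i)))‖ = σhat i := by
      have h1 : ‖toE (Ahatᵀ.mulVec (toE (vhat i)))‖ ^ 2 = σhat i ^ 2 := by
        rw [normsq_transpose Ahat (toE (vhat i))]
        have h2 : toE ((Ahat * Ahatᵀ).mulVec (toE (vhat i))) = σhat i ^ 2 • toE (vhat i) := by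
          rw [← toE_smul]; exact congrArg toE (hvhat i)
        rw [h2, real_inner_smul_right, real_inner_self_eq_norm_sq, hunithat i]
        ring
      have := norm_nonneg (toE (Ahatᵀ.mulVec (toE (vhat i))))
      nlinarith [hσhatnonneg i]
    -- key identity and bound
    have hkey : ∀ j, |(σ j ^ 2 - σhat i ^ 2) * c j| ≤ E * (σ j + σhat i) := by
      intro j
      have hid : (σ j ^ 2 - σhat i ^ 2) * c j =
          ⟪toE (Aᵀ.mulVec (toE (v j))), toE ((A - Ahat)ᵀ.mulVec (toE (vhat i)))⟫_ℝ +
          ⟪toE ((A - Ahat)ᵀ.mulVec (toE (v j))), toE (Ahatᵀ.mulVec (toE (vhat i)))⟫_ℝ := by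
        set y1 : Ek k := toE ((A - Ahat)ᵀ.mulVec (toE (vhat i))) with hy1
        set y2 : Ek k := toE (Ahatᵀ.mulVec (toE (vhat i))) with hy2
        have e1 : ⟪toE (v j), toE ((A * Aᵀ).mulVec (toE (vhat i)))⟫_ℝ = σ j ^ 2 * c j := by
          have h3 : ((A * Aᵀ)ᵀ : Matrix (Fin k) (Fin k) ℝ) = A * Aᵀ := by
            rw [Matrix.transpose_mul, Matrix.transpose_transpose]
          have h4 := adjoint_eq (A * Aᵀ) (toE (v j)) (toE (vhat i))
          rw [h3] at h4
          have h5 : toE ((A * Aᵀ).mulVec (toE (v j))) = σ j ^ 2 • toE (v j) := by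
            rw [← toE_smul]; exact congrArg toE (hv j)
          rw [← h4, h5, real_inner_smul_left]
        have e2 : ⟪toE (v j), toE ((Ahat * Ahatᵀ).mulVec (toE (vhat i)))⟫_ℝ
            = σhat i ^ 2 * c j := by
          have h5 : toE ((Ahat * Ahatᵀ).mulVec (toE (vhat i))) = σhat i ^ 2 • toE (vhat i) := by
            rw [← toE_smul]; exact congrArg toE (hvhat i)
          rw [h5, real_inner_smul_right]
        have hmat : A * Aᵀ - Ahat * Ahatᵀ = A * (A - Ahat)ᵀ + (A - Ahat) * Ahatᵀ := by
          rw [Matrix.transpose_sub, Matrix.mul_sub, Matrix.sub_mul]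
          abel
        have e3 : ⟪toE (v j), toE ((A * Aᵀ).mulVec (toE (vhat i)))⟫_ℝ -
            ⟪toE (v j), toE ((Ahat * Ahatᵀ).mulVec (toE (vhat i)))⟫_ℝ =
            ⟪toE (v j), toE ((A * (A - Ahat)ᵀ).mulVec (toE (vhat i)))⟫_ℝ +
            ⟪toE (v j), toE (((A - Ahat) * Ahatᵀ).mulVec (toE (vhat i)))⟫_ℝ := by
          rw [← inner_sub_right, ← inner_add_right]
          congr 1
          rw [← toE_sub, ← toE_add]
          congr 1
          rw [← Matrix.sub_mulVec, ← Matrix.add_mulVec, hmat]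
        have e4 : ⟪toE (v j), toE ((A * (A - Ahat)ᵀ).mulVec (toE (vhat i)))⟫_ℝ =
            ⟪toE (Aᵀ.mulVec (toE (v j))), y1⟫_ℝ := by
          have h6 : toE ((A * (A - Ahat)ᵀ).mulVec (toE (vhat i))) = toE (A.mulVec y1) := by
            rw [hy1]
            congr 1
            simp only [toE]
            rw [Matrix.mulVec_mulVec]
          rw [h6]
          calc ⟪toE (v j), toE (A.mulVec y1)⟫_ℝ
              = ⟪toE (A.mulVec y1), toE (v j)⟫_ℝ := real_inner_comm _ _
            _ = ⟪y1, toE (Aᵀ.mulVec (toE (v j)))⟫_ℝ := adjoint_eq A y1 (toE (v j))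
            _ = ⟪toE (Aᵀ.mulVec (toE (v j))), y1⟫_ℝ := real_inner_comm _ _
        have e5 : ⟪toE (v j), toE (((A - Ahat) * Ahatᵀ).mulVec (toE (vhat i)))⟫_ℝ =
            ⟪toE ((A - Ahat)ᵀ.mulVec (toE (v j))), y2⟫_ℝ := by
          have h6 : toE (((A - Ahat) * Ahatᵀ).mulVec (toE (vhat i)))
              = toE ((A - Ahat).mulVec y2) := by
            rw [hy2]
            congr 1
            simp only [toE]
            rw [Matrix.mulVec_mulVec]
          rw [h6]
          calc ⟪toE (v j), toE ((A - Ahat).mulVec y2)⟫_ℝ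
              = ⟪toE ((A - Ahat).mulVec y2), toE (v j)⟫_ℝ := real_inner_comm _ _
            _ = ⟪y2, toE ((A - Ahat)ᵀ.mulVec (toE (v j)))⟫_ℝ :=
                adjoint_eq (A - Ahat) y2 (toE (v j))
            _ = ⟪toE ((A - Ahat)ᵀ.mulVec (toE (v j))), y2⟫_ℝ := real_inner_comm _ _
        rw [← e4, ← e5, ← e3, e1, e2]
        ring
      rw [hid]
      have b1 : |⟪toE (Aᵀ.mulVec (toE (v j))), toE ((A - Ahat)ᵀ.mulVec (toE (vhat i)))⟫_ℝ| ≤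
          σ j * E := by
        calc |⟪toE (Aᵀ.mulVec (toE (v j))), toE ((A - Ahat)ᵀ.mulVec (toE (vhat i)))⟫_ℝ|
            ≤ ‖toE (Aᵀ.mulVec (toE (v j)))‖ * ‖toE ((A - Ahat)ᵀ.mulVec (toE (vhat i)))‖ :=
              abs_real_inner_le_norm _ _
          _ ≤ σ j * E := by
              rw [hnAv j]
              have := hAET (toE (vhat i))
              rw [hunithat i, mul_one] at this
              exact mul_le_mul_of_nonneg_left this (hσnonneg j)
      have b2 : |⟪toE ((A - Ahat)ᵀ.mulVec (toE (v j))), toE (Ahatᵀ.mulVec (toE (vhat i)))⟫_ℝ| ≤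
          E * σhat i := by
        calc |⟪toE ((A - Ahat)ᵀ.mulVec (toE (v j))), toE (Ahatᵀ.mulVec (toE (vhat i)))⟫_ℝ|
            ≤ ‖toE ((A - Ahat)ᵀ.mulVec (toE (v j)))‖ * ‖toE (Ahatᵀ.mulVec (toE (vhat i)))‖ :=
              abs_real_inner_le_norm _ _
          _ ≤ E * σhat i := by
              rw [hnAhat]
              have := hAET (toE (v j))
              rw [hunit j, mul_one] at this
              exact mul_le_mul_of_nonneg_right this (hσhatnonneg i)
      calc |⟪toE (Aᵀ.mulVec (toE (v j))), toE ((A - Ahat)ᵀ.mulVec (toE (vhat i)))⟫_ℝ +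
            ⟪toE ((A - Ahat)ᵀ.mulVec (toE (v j))), toE (Ahatᵀ.mulVec (toE (vhat i)))⟫_ℝ|
          ≤ _ + _ := abs_add_le _ _
        _ ≤ σ j * E + E * σhat i := add_le_add b1 b2
        _ = E * (σ j + σhat i) := by ring
    -- coefficient bound for j ≠ i
    have hcj : ∀ j, j ≠ i → |c j| ≤ E / (Δ - E) := by
      intro j hne
      have hΔ0 : (0 : ℝ) < Δ := lt_of_le_of_lt hE0 hΔE
      have hs0 : 0 < σ j + σhat i := lt_of_lt_of_le hΔ0 (by linarith [hσΔ j, hσhatnonneg i])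
      have h1 : |σ j - σhat i| * |c j| ≤ E := by
        have h2 := hkey j
        have h3 : |(σ j ^ 2 - σhat i ^ 2) * c j| =
            |σ j - σhat i| * (σ j + σhat i) * |c j| := by
          rw [abs_mul]
          congr 1
          have : σ j ^ 2 - σhat i ^ 2 = (σ j - σhat i) * (σ j + σhat i) := by ring
          rw [this, abs_mul, abs_of_pos hs0]
        rw [h3] at h2
        have h4 : |σ j - σhat i| * |c j| * (σ j + σhat i) ≤ E * (σ j + σhat i) := by
          calc |σ j - σhat i| * |c j| * (σ j + σhat i)
              = |σ j - σhat i| * (σ j + σhat i) * |c j| := by ring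
            _ ≤ E * (σ j + σhat i) := h2
        exact le_of_mul_le_mul_right h4 hs0
      have hgap2 : Δ - E ≤ |σ j - σhat i| := by
        have h5 : Δ ≤ |σ j - σ i| := gap_ge Δ σ hσsorted hgap i j hne
        have h6 : |σ j - σ i| ≤ |σ j - σhat i| + |σhat i - σ i| := abs_sub_le _ _ _
        have h7 : |σhat i - σ i| = |σ i - σhat i| := abs_sub_comm _ _
        linarith [hweyl]
      rw [le_div_iff₀ (by linarith : (0:ℝ) < Δ - E)]
      calc |c j| * (Δ - E) ≤ |c j| * |σ j - σhat i| :=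
            mul_le_mul_of_nonneg_left hgap2 (abs_nonneg _)
        _ = |σ j - σhat i| * |c j| := mul_comm _ _
        _ ≤ E := h1
    -- assemble
    have herase : ∑ j ∈ Finset.univ.erase i, c j ^ 2 = 1 - c i ^ 2 := by
      have h1 := Finset.add_sum_erase Finset.univ (fun j => c j ^ 2) (Finset.mem_univ i)
      rw [hpar] at h1
      linarith
    have hB : ∀ j ∈ Finset.univ.erase i, c j ^ 2 ≤ (E / (Δ - E)) ^ 2 := by
      intro j hj
      have hne : j ≠ i := (Finset.mem_erase.mp hj).1
      have := hcj j hne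
      nlinarith [abs_nonneg (c j), sq_abs (c j)]
    have hcard : (Finset.univ.erase i).card = k - 1 := by
      rw [Finset.card_erase_of_mem (Finset.mem_univ i), Finset.card_univ, Fintype.card_fin]
    have hsum1 : 1 - c i ^ 2 ≤ (k - 1 : ℕ) * (E / (Δ - E)) ^ 2 := by
      rw [← herase, ← hcard]
      exact Finset.sum_le_card_nsmul _ _ _ hB |>.trans_eq (by rw [nsmul_eq_mul])
    have hΔE' : (0:ℝ) < Δ - E := by linarith
    have hk1 : ((k - 1 : ℕ) : ℝ) ≤ 2 * k := by
      have : (k - 1 : ℕ) ≤ k := Nat.sub_le _ _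
      calc ((k - 1 : ℕ) : ℝ) ≤ (k : ℝ) := Nat.cast_le.mpr this
        _ ≤ 2 * k := by linarith [Nat.cast_nonneg (α := ℝ) k]
    have hmain : ∑ l, (v i l - vhat i l) ^ 2 ≤ 4 * k * (E / (Δ - E)) ^ 2 := by
      have hexp : ∑ l, (v i l - vhat i l) ^ 2 = 2 - 2 * c i := by
        have h1 : ∀ l, (v i l - vhat i l) ^ 2 =
            v i l * v i l + vhat i l * vhat i l - 2 * (v i l * vhat i l) := by
          intro l; ring
        rw [Finset.sum_congr rfl (fun l _ => h1 l), Finset.sum_sub_distrib,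
          Finset.sum_add_distrib, ← Finset.mul_sum]
        have h2 : ∑ l, v i l * v i l = 1 := by simpa using hvortho i i
        have h3 : ∑ l, vhat i l * vhat i l = 1 := by simpa using hvhatortho i i
        rw [h2, h3, ← hcisum]
        ring
      rw [hexp]
      have h5 : 2 - 2 * c i ≤ 2 * (1 - c i ^ 2) := by nlinarith
      have h6 : 2 * (1 - c i ^ 2) ≤ 2 * ((k - 1 : ℕ) * (E / (Δ - E)) ^ 2) := by linarith
      have h7 : 2 * ((k - 1 : ℕ) * (E / (Δ - E)) ^ 2) ≤ 4 * k * (E / (Δ - E)) ^ 2 := by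
        have h8 : (0:ℝ) ≤ (E / (Δ - E)) ^ 2 := sq_nonneg _
        nlinarith [hk1]
      linarith
    have hR0 : 0 ≤ 2 * Real.sqrt k * E / (Δ - E) := by positivity
    have hRsq : (2 * Real.sqrt k * E / (Δ - E)) ^ 2 = 4 * k * (E / (Δ - E)) ^ 2 := by
      rw [div_pow, mul_pow, mul_pow, Real.sq_sqrt (Nat.cast_nonneg k), div_pow]
      ring
    calc Real.sqrt (∑ l, (v i l - vhat i l) ^ 2)
        ≤ Real.sqrt ((2 * Real.sqrt k * E / (Δ - E)) ^ 2) := by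
          apply Real.sqrt_le_sqrt
          rw [hRsq]
          exact hmain
      _ = 2 * Real.sqrt k * E / (Δ - E) := Real.sqrt_sq hR0
end
end
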